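/- arXiv:1402.5663 — 7 statements merged into one kernel-verified Lean document; each statement's English description precedes it below -/
import Mathlib

section
/- Let d ≥ 2 be an integer and let c ∈ ℝ^d with c ≠ 0. Then there exists a constant c₀ > 0 such that for every x ∈ ℝ^d with x ≠ 0 one has |𝕂(x)c| ≥ c₀‖x‖^{−d}, where |·| is the Euclidean norm on ℝ^d. Equivalently, inf_{x≠0} ‖x‖^d·|𝕂(x)c| > 0. -/
/-- For an integer `d ≥ 2` and `c ∈ ℝ^d` with `c ≠ 0`, there exists
`c₀ > 0` such that for every `x ≠ 0`, the Euclidean norm of the matrix-vector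
product `𝕂(x) c` is at least `c₀ ‖x‖^{-d}`, where
`𝕂_{j,k}(x) = (Γ(d/2)/(2π^{d/2}))·(−δ_{j,k}‖x‖² + d·x_j·x_k)/‖x‖^{d+2}`. -/
theorem stmt1 (d : ℕ) (hd : 2 ≤ d)
    (c : EuclideanSpace ℝ (Fin d)) (hc : c ≠ 0) :
    ∃ c₀ > (0 : ℝ), ∀ x : EuclideanSpace ℝ (Fin d), x ≠ 0 →
      c₀ * ‖x‖ ^ (-(d : ℝ)) ≤
        Real.sqrt (∑ j : Fin d,
          (∑ k : Fin d,
            Real.Gamma ((d : ℝ) / 2) / (2 * Real.pi ^ ((d : ℝ) / 2)) *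
              (-(if j = k then (1 : ℝ) else 0) * ‖x‖ ^ 2 + d * x j * x k) / ‖x‖ ^ (d + 2) *
              c k) ^ 2) := by
  set C : ℝ := Real.Gamma ((d : ℝ) / 2) / (2 * Real.pi ^ ((d : ℝ) / 2)) with hCdef
  have hdpos : (0:ℝ) < (d:ℝ)/2 := by
    have : (0:ℕ) < d := by omega
    positivity
  have hCpos : 0 < C := div_pos (Real.Gamma_pos_of_pos hdpos) (by positivity)
  have hcpos : 0 < ‖c‖ := norm_pos_iff.mpr hc
  refine ⟨C * ‖c‖, by positivity, ?_⟩
  intro x hx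
  have hn : 0 < ‖x‖ := norm_pos_iff.mpr hx
  have hx2 : (‖x‖:ℝ) ^ 2 = ∑ j : Fin d, x j ^ 2 := by
    rw [EuclideanSpace.norm_eq, Real.sq_sqrt (by positivity)]
    simp [Real.norm_eq_abs, sq_abs]
  have hc2 : (‖c‖:ℝ) ^ 2 = ∑ j : Fin d, c j ^ 2 := by
    rw [EuclideanSpace.norm_eq, Real.sq_sqrt (by positivity)]
    simp [Real.norm_eq_abs, sq_abs]
  set s : ℝ := ∑ k : Fin d, x k * c k with hs
  have hinner : ∀ j : Fin d,
      (∑ k : Fin d, C * (-(if j = k then (1 : ℝ) else 0) * ‖x‖ ^ 2 + d * x j * x k)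
        / ‖x‖ ^ (d + 2) * c k)
      = C / ‖x‖ ^ (d + 2) * (d * x j * s - ‖x‖ ^ 2 * c j) := by
    intro j
    have step : ∀ k : Fin d,
        C * (-(if j = k then (1 : ℝ) else 0) * ‖x‖ ^ 2 + d * x j * x k) / ‖x‖ ^ (d + 2) * c k
        = (C / ‖x‖ ^ (d + 2)) * (d * x j) * (x k * c k)
          - (if j = k then (C / ‖x‖ ^ (d + 2)) * (‖x‖ ^ 2 * c k) else 0) := by
      intro k
      by_cases h : j = k <;> simp [h] <;> ring
    rw [Finset.sum_congr rfl fun k _ => step k, Finset.sum_sub_distrib,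
      ← Finset.mul_sum, Finset.sum_ite_eq, if_pos (Finset.mem_univ j), ← hs]
    ring
  simp only [hinner]
  rw [Real.le_sqrt (by positivity) (by positivity)]
  have factor : ∑ j : Fin d, (C / ‖x‖ ^ (d + 2) * (d * x j * s - ‖x‖ ^ 2 * c j)) ^ 2
      = (C / ‖x‖ ^ (d + 2)) ^ 2 *
        (((d:ℝ) ^ 2 - 2 * d) * s ^ 2 * ‖x‖ ^ 2 + ‖x‖ ^ 4 * ‖c‖ ^ 2) := by
    simp_rw [mul_pow]
    rw [← Finset.mul_sum]
    congr 1
    have expand : ∀ j : Fin d, (d * x j * s - ‖x‖ ^ 2 * c j) ^ 2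
        = ((d:ℝ) ^ 2 * s ^ 2) * (x j) ^ 2 - (2 * d * s * ‖x‖ ^ 2) * (x j * c j)
          + ‖x‖ ^ 4 * (c j) ^ 2 := fun j => by ring
    simp_rw [expand]
    rw [Finset.sum_add_distrib, Finset.sum_sub_distrib, ← Finset.mul_sum,
      ← Finset.mul_sum, ← Finset.mul_sum, ← hx2, ← hc2, ← hs]
    ring
  rw [factor, Real.rpow_neg hn.le, Real.rpow_natCast]
  have h2 : (C * ‖c‖ * (‖x‖ ^ d)⁻¹) ^ 2
      = (C / ‖x‖ ^ (d + 2)) ^ 2 * (‖x‖ ^ 4 * ‖c‖ ^ 2) := by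
    field_simp
    ring
  rw [h2]
  have hd2 : (2:ℝ) ≤ (d:ℝ) := by exact_mod_cast hd
  have hYX : 0 ≤ ((d:ℝ) ^ 2 - 2 * d) * s ^ 2 * ‖x‖ ^ 2 :=
    mul_nonneg (mul_nonneg (by nlinarith) (sq_nonneg s)) (sq_nonneg ‖x‖)
  exact mul_le_mul_of_nonneg_left (le_add_of_nonneg_left hYX)
    (sq_nonneg (C / ‖x‖ ^ (d + 2)))
end

section
/- Let d ≥ 2 be an integer and C₀ > 0. Let K : ℝ^d × (0,∞) → ℝ be measurable and satisfy |K(y,s)| ≤ C₀·min(‖y‖^{−d}, s^{−d/2}) for all y ≠ 0 and s > 0. Then there exists a constant C > 0 (depending only on d and C₀) such that for all t > 0 and all x ∈ ℝ^d with ‖x‖ ≥ e·√t one has ∫₀^t ∫_{{y : ‖y‖ ≤ ‖x‖}} |K(y,s)| dy ds ≤ C·t·log(‖x‖/√t). -/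
/-!
In polar coordinates, `min (‖y‖ ^ (-d), r ^ (-d))` integrates over the ball of radius `R ≥ r`
to `|B₁| (1 + d log (R / r))`: the plateau `‖y‖ ≤ r` contributes `|B₁|` and the shell
`r < ‖y‖ ≤ R` contributes `d |B₁| log (R / r)`. With `r = √s` and `R = ‖x‖`, integrating over
`s ∈ (0, t]` gives `|B₁| t (1 + d (log (R / √t) + 1 / 2))`, and `log (R / √t) ≥ 1` absorbs the
constant terms into a multiple of `t log (R / √t)`.
-/

open MeasureTheory Set Real Metric Module

theorem integral_Ioc_pow_mul_min_rpow {d : ℕ} (hd : d ≠ 0) {r R : ℝ} (hr : 0 < r)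
    (hrR : r ≤ R) :
    ∫ y in Ioc 0 R, y ^ (d - 1) * min (y ^ (-(d : ℝ))) (r ^ (-(d : ℝ))) = 1 / d + log (R / r) := by
  have hd1 : d - 1 + 1 = d := Nat.sub_add_cancel (Nat.one_le_iff_ne_zero.2 hd)
  have h_inner : EqOn (fun y => y ^ (d - 1) * min (y ^ (-(d : ℝ))) (r ^ (-(d : ℝ))))
      (fun y => r ^ (-(d : ℝ)) * y ^ (d - 1)) (Ioc 0 r) := fun y hy => by
    dsimp only
    rw [min_eq_right (rpow_le_rpow_of_nonpos hy.1 hy.2 (by simp)), mul_comm]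
  have h_outer : EqOn (fun y => y ^ (d - 1) * min (y ^ (-(d : ℝ))) (r ^ (-(d : ℝ))))
      (fun y => y⁻¹) (Ioc r R) := fun y hy => by
    have hy0 : 0 < y := hr.trans hy.1
    dsimp only
    rw [min_eq_left (rpow_le_rpow_of_nonpos hr hy.1.le (by simp)), rpow_neg hy0.le, rpow_natCast,
      ← pow_sub_one_mul hd]
    field_simp
  have h0 : (0 : ℝ) ∉ uIcc r R := fun h => (uIcc_of_le hrR ▸ h).1.not_gt hr
  have hd' : (d : ℝ) ≠ 0 := Nat.cast_ne_zero.2 hd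
  rw [← Ioc_union_Ioc_eq_Ioc hr.le hrR, setIntegral_union (Ioc_disjoint_Ioc_of_le le_rfl)
      measurableSet_Ioc ((integrableOn_congr_fun h_inner measurableSet_Ioc).2
        (Continuous.integrableOn_Ioc (by fun_prop)))
      ((integrableOn_congr_fun h_outer measurableSet_Ioc).2
        (intervalIntegral.intervalIntegrable_inv (fun y hy h => h0 (h ▸ hy))
          continuousOn_id).1),
    setIntegral_congr_fun measurableSet_Ioc h_inner, setIntegral_congr_fun measurableSet_Ioc h_outer,
    ← intervalIntegral.integral_of_le hr.le, ← intervalIntegral.integral_of_le hrR,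
    intervalIntegral.integral_const_mul, integral_pow, integral_inv h0, hd1,
    zero_pow hd, rpow_neg hr.le, rpow_natCast, Nat.cast_sub (Nat.one_le_iff_ne_zero.2 hd),
    Nat.cast_one, sub_add_cancel, sub_zero]
  field_simp

section Ball

variable {E : Type*} [NormedAddCommGroup E] [NormedSpace ℝ E] [FiniteDimensional ℝ E]
  [Nontrivial E] [MeasurableSpace E] [BorelSpace E] (μ : Measure E) [μ.IsAddHaarMeasure]

theorem integral_closedBall_min_rpow_norm {r R : ℝ} (hr : 0 < r) (hrR : r ≤ R) :
    ∫ x in closedBall (0 : E) R, min (‖x‖ ^ (-(finrank ℝ E : ℝ))) (r ^ (-(finrank ℝ E : ℝ))) ∂μ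
      = μ.real (ball 0 1) * (1 + finrank ℝ E * log (R / r)) := by
  set d := finrank ℝ E
  have hd : d ≠ 0 := finrank_pos.ne'
  set f : ℝ → ℝ := fun ρ => min (ρ ^ (-(d : ℝ))) (r ^ (-(d : ℝ)))
  have h_radial : ∫ y in Ioi (0 : ℝ), y ^ (d - 1) • (Iic R).indicator f y = 1 / d + log (R / r) := by
    simp_rw [smul_eq_mul, ← indicator_mul_right (Iic R) (fun y : ℝ => y ^ (d - 1)) f]
    rw [setIntegral_indicator measurableSet_Iic, Ioi_inter_Iic]
    exact integral_Ioc_pow_mul_min_rpow hd hr hrR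
  calc ∫ x in closedBall (0 : E) R, f ‖x‖ ∂μ = ∫ x, (Iic R).indicator f ‖x‖ ∂μ := by
        rw [← integral_indicator measurableSet_closedBall]
        congr 1 with x
        simp [indicator]
    _ = _ := by
      rw [integral_fun_norm_addHaar μ, h_radial, nsmul_eq_mul, smul_eq_mul]
      change (d : ℝ) * _ = _
      have hd' : (d : ℝ) ≠ 0 := Nat.cast_ne_zero.2 hd
      field_simp

theorem lintegral_closedBall_le_of_abs_le_min_rpow {C₀ r R : ℝ} (hC₀ : 0 ≤ C₀) (hr : 0 < r)
    (hrR : r ≤ R) {k : E → ℝ}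
    (hk : ∀ x ≠ 0, |k x| ≤ C₀ * min (‖x‖ ^ (-(finrank ℝ E : ℝ))) (r ^ (-(finrank ℝ E : ℝ)))) :
    ∫⁻ x in closedBall (0 : E) R, ENNReal.ofReal |k x| ∂μ
      ≤ ENNReal.ofReal (C₀ * μ.real (ball 0 1) * (1 + finrank ℝ E * log (R / r))) := by
  set g : E → ℝ := fun x => C₀ * min (‖x‖ ^ (-(finrank ℝ E : ℝ))) (r ^ (-(finrank ℝ E : ℝ)))
  have hg_nonneg : ∀ x, 0 ≤ g x := fun x => by positivity
  have hg_int : IntegrableOn g (closedBall 0 R) μ :=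
    Measure.integrableOn_of_bounded (M := C₀ * r ^ (-(finrank ℝ E : ℝ)))
      measure_closedBall_lt_top.ne (Measurable.aestronglyMeasurable (by fun_prop))
      (.of_forall fun x => by
        rw [Real.norm_of_nonneg (hg_nonneg x)]
        exact mul_le_mul_of_nonneg_left (min_le_right _ _) hC₀)
  calc ∫⁻ x in closedBall (0 : E) R, ENNReal.ofReal |k x| ∂μ
      ≤ ∫⁻ x in closedBall (0 : E) R, ENNReal.ofReal (g x) ∂μ := by
        refine lintegral_mono_ae ?_
        filter_upwards [ae_restrict_of_ae (Measure.ae_ne μ 0)] with x hx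
        exact ENNReal.ofReal_le_ofReal (hk x hx)
    _ = ENNReal.ofReal (∫ x in closedBall (0 : E) R, g x ∂μ) :=
        (ofReal_integral_eq_lintegral_ofReal hg_int (.of_forall hg_nonneg)).symm
    _ = _ := by
      rw [integral_const_mul, integral_closedBall_min_rpow_norm μ hr hrR, mul_assoc]

end Ball

theorem eqOn_log_div_sqrt {R : ℝ} (hR : 0 < R) :
    EqOn (fun s => log (R / √s)) (fun s => log R - log s / 2) (Ioi 0) := fun s hs => by
  dsimp only
  rw [log_div hR.ne' (sqrt_pos.2 hs).ne', log_sqrt (le_of_lt hs)]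

theorem integrableOn_log_div_sqrt {R : ℝ} (hR : 0 < R) (t : ℝ) :
    IntegrableOn (fun s => log (R / √s)) (Ioc 0 t) := by
  refine (integrableOn_congr_fun ((eqOn_log_div_sqrt hR).mono Ioc_subset_Ioi_self)
    measurableSet_Ioc).2 ?_
  exact (intervalIntegrable_const.sub (intervalIntegral.intervalIntegrable_log'.div_const 2)).1

theorem integral_Ioc_log_div_sqrt {R t : ℝ} (hR : 0 < R) (ht : 0 < t) :
    ∫ s in Ioc 0 t, log (R / √s) = t * (log (R / √t) + 1 / 2) := by
  rw [setIntegral_congr_fun measurableSet_Ioc ((eqOn_log_div_sqrt hR).mono Ioc_subset_Ioi_self),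
    ← intervalIntegral.integral_of_le ht.le, intervalIntegral.integral_sub intervalIntegrable_const
      (intervalIntegral.intervalIntegrable_log'.div_const 2),
    intervalIntegral.integral_const, intervalIntegral.integral_div, integral_log,
    log_div hR.ne' (sqrt_pos.2 ht).ne', log_sqrt ht.le]
  simp only [sub_zero, zero_mul, add_zero, smul_eq_mul]
  ring

theorem lintegral_Ioc_ofReal_mul_one_add_mul_log_div_sqrt {a b R t : ℝ} (ha : 0 ≤ a) (hb : 0 ≤ b)
    (ht : 0 < t) (htR : √t ≤ R) :
    ∫⁻ s in Ioc 0 t, ENNReal.ofReal (a * (1 + b * log (R / √s)))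
      = ENNReal.ofReal (a * t * (1 + b * (log (R / √t) + 1 / 2))) := by
  have hR : 0 < R := (sqrt_pos.2 ht).trans_le htR
  have h_nonneg : ∀ s ∈ Ioc 0 t, 0 ≤ a * (1 + b * log (R / √s)) := fun s hs => by
    have : 0 ≤ log (R / √s) :=
      log_nonneg ((one_le_div (sqrt_pos.2 hs.1)).2 ((sqrt_le_sqrt hs.2).trans htR))
    positivity
  have h_one : IntegrableOn (fun _ => (1 : ℝ)) (Ioc 0 t) :=
    integrableOn_const measure_Ioc_lt_top.ne
  have h_log : IntegrableOn (fun s => b * log (R / √s)) (Ioc 0 t) :=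
    (integrableOn_log_div_sqrt hR t).const_mul b
  have h_int : IntegrableOn (fun s => a * (1 + b * log (R / √s))) (Ioc 0 t) :=
    (h_one.add h_log).const_mul a
  rw [← ofReal_integral_eq_lintegral_ofReal h_int
      (ae_restrict_of_forall_mem measurableSet_Ioc h_nonneg),
    integral_const_mul, integral_add h_one h_log,
    integral_const_mul, integral_Ioc_log_div_sqrt hR ht, setIntegral_const,
    Real.volume_real_Ioc_of_le ht.le]
  simp only [sub_zero, smul_eq_mul]
  ring_nf

/-- If `K : ℝ^d × (0,∞) → ℝ` is measurable and satisfies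
`|K(y,s)| ≤ C₀ min(‖y‖^{−d}, s^{−d/2})`, then there is `C > 0` depending only on
`d` and `C₀` such that for all `t > 0` and `‖x‖ ≥ e√t`,
`∫₀^t ∫_{‖y‖ ≤ ‖x‖} |K(y,s)| dy ds ≤ C t log(‖x‖/√t)`. -/
theorem stmt3 (d : ℕ) (hd : 2 ≤ d) (C₀ : ℝ) (hC₀ : 0 < C₀) :
    ∃ C > (0 : ℝ), ∀ K : EuclideanSpace ℝ (Fin d) → ℝ → ℝ,
      Measurable (Function.uncurry K) →
      (∀ y : EuclideanSpace ℝ (Fin d), y ≠ 0 → ∀ s : ℝ, 0 < s →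
        |K y s| ≤ C₀ * min (‖y‖ ^ (-(d : ℝ))) (s ^ (-(d : ℝ) / 2))) →
      ∀ t : ℝ, 0 < t → ∀ x : EuclideanSpace ℝ (Fin d),
        Real.exp 1 * Real.sqrt t ≤ ‖x‖ →
        ∫⁻ s in Set.Ioc (0 : ℝ) t,
            ∫⁻ y in {y : EuclideanSpace ℝ (Fin d) | ‖y‖ ≤ ‖x‖}, ENNReal.ofReal |K y s|
          ≤ ENNReal.ofReal (C * t * Real.log (‖x‖ / Real.sqrt t)) := by
  have : NeZero d := ⟨by omega⟩
  set V := (volume : Measure (EuclideanSpace ℝ (Fin d))).real (ball 0 1)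
  have hV : 0 < V := ENNReal.toReal_pos (measure_ball_pos _ _ one_pos).ne' measure_ball_lt_top.ne
  refine ⟨C₀ * V * (1 + 3 * d / 2), by positivity, fun K _ hK t ht x hx => ?_⟩
  set R := ‖x‖
  set L := log (R / √t)
  have hsqrt_t : 0 < √t := sqrt_pos.2 ht
  have htR : √t ≤ R := le_trans (le_mul_of_one_le_left hsqrt_t.le (one_le_exp zero_le_one)) hx
  have hL : 1 ≤ L := by
    rw [← log_exp 1]
    exact log_le_log (exp_pos 1) ((le_div_iff₀ hsqrt_t).2 hx)
  have h_ball : {y : EuclideanSpace ℝ (Fin d) | ‖y‖ ≤ R} = closedBall 0 R := by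
    ext y
    simp
  have h_slice : ∀ s ∈ Ioc 0 t, ∫⁻ y in closedBall 0 R, ENNReal.ofReal |K y s|
      ≤ ENNReal.ofReal (C₀ * V * (1 + d * log (R / √s))) := fun s hs => by
    have h_pow : √s ^ (-(d : ℝ)) = s ^ (-(d : ℝ) / 2) := by
      rw [sqrt_eq_rpow, ← rpow_mul hs.1.le]
      ring_nf
    have := lintegral_closedBall_le_of_abs_le_min_rpow volume hC₀.le (sqrt_pos.2 hs.1)
      ((sqrt_le_sqrt hs.2).trans htR) (k := fun y => K y s)
    simp only [finrank_euclideanSpace_fin, h_pow] at this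
    exact this fun y hy => hK y hy s hs.1
  rw [h_ball]
  calc _ ≤ ∫⁻ s in Ioc 0 t, ENNReal.ofReal (C₀ * V * (1 + d * log (R / √s))) :=
        setLIntegral_mono (by fun_prop) h_slice
    _ = ENNReal.ofReal (C₀ * V * t * (1 + d * (L + 1 / 2))) :=
        lintegral_Ioc_ofReal_mul_one_add_mul_log_div_sqrt (by positivity) (by positivity) ht htR
    _ ≤ ENNReal.ofReal (C₀ * V * (1 + 3 * d / 2) * t * L) := by
        refine ENNReal.ofReal_le_ofReal ?_
        have : 1 + d * (L + 1 / 2) ≤ (1 + 3 * d / 2) * L := by nlinarith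
        nlinarith [mul_pos (mul_pos hC₀ hV) ht]
end

section
/- Let d ≥ 2 be an integer, C₀ > 0 and ε > 0. Let K : ℝ^d × (0,∞) → ℝ be measurable with |K(y,s)| ≤ C₀·min(‖y‖^{−d}, s^{−d/2}) for all y ≠ 0, s > 0, and let f : ℝ^d × [0,∞) → ℝ be measurable with |f(y,s)| ≤ ε·min((1+‖y‖)^{−d−2}, (1+s)^{−(d+2)/2}) for a.e. (y,s) and ∫₀^∞ ∫_{ℝ^d} |f(y,s)| dy ds ≤ ε. Then there exists a constant C > 0 (depending only on d and C₀) such that for all t > 0 and all x ∈ ℝ^d, |∫₀^t ∫_{ℝ^d} K(x−y, t−s) f(y,s) dy ds| ≤ C·ε·min((1+‖x‖)^{−d}, (1+t)^{−d/2}). -/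
/-!
Put `M = 1 + ‖x‖ + √t` and `r = M / 3`. Where `‖x - y‖ + √(t - s) ≥ r` the kernel is `O(r⁻ᵈ)`,
and the `L¹` bound on `f` controls that part of the integral. Elsewhere `1 + ‖y‖ + √s ≥ 2r` by the
triangle inequality, so `|f| = O(ε r⁻ᵈ⁻²)` there; interpolating the kernel bound as
`‖x - y‖^(1-d) (t - s)^(-1/2)` makes it integrable over the ball `‖x - y‖ < r` times the interval
`t - s ≤ r²`, with integral `O(r²)`. Both parts are `O(ε M⁻ᵈ)`, and
`M⁻ᵈ ≤ min ((1 + ‖x‖)⁻ᵈ) ((1 + t)^(-d/2))`.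
-/

open MeasureTheory Metric Set
open scoped ENNReal

lemma sqrt_add_le_sqrt_add_sqrt {a b : ℝ} (ha : 0 ≤ a) (hb : 0 ≤ b) : √(a + b) ≤ √a + √b :=
  Real.sqrt_le_iff.2 ⟨by positivity, by
    nlinarith [Real.sq_sqrt ha, Real.sq_sqrt hb,
      mul_nonneg (Real.sqrt_nonneg a) (Real.sqrt_nonneg b)]⟩

lemma rpow_neg_div_two_eq_sqrt_rpow_neg {b : ℝ} (hb : 0 ≤ b) (k : ℝ) :
    b ^ (-k / 2) = √b ^ (-k) := by
  rw [Real.sqrt_eq_rpow, ← Real.rpow_mul hb]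
  ring_nf

lemma min_rpow_neg_le_half_add_sqrt_rpow_neg {a b k : ℝ} (ha : 0 < a) (hb : 0 < b) (hk : 0 ≤ k) :
    min (a ^ (-k)) (b ^ (-k / 2)) ≤ ((a + √b) / 2) ^ (-k) := by
  have hk' : -k ≤ 0 := neg_nonpos.2 hk
  rw [rpow_neg_div_two_eq_sqrt_rpow_neg hb.le]
  rcases le_total √b a with h | h
  · exact (min_le_left _ _).trans
      (Real.rpow_le_rpow_of_nonpos (by positivity) (by linarith) hk')
  · exact (min_le_right _ _).trans
      (Real.rpow_le_rpow_of_nonpos (by positivity) (by linarith) hk')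

lemma min_le_rpow_mul_rpow {a b θ : ℝ} (ha : 0 < a) (hb : 0 < b) (h0 : 0 ≤ θ) (h1 : θ ≤ 1) :
    min a b ≤ a ^ θ * b ^ (1 - θ) := by
  have hm : 0 < min a b := lt_min ha hb
  calc min a b = min a b ^ θ * min a b ^ (1 - θ) := by
        rw [← Real.rpow_add hm, add_sub_cancel, Real.rpow_one]
    _ ≤ a ^ θ * b ^ (1 - θ) :=
        mul_le_mul (Real.rpow_le_rpow hm.le (min_le_left _ _) h0)
          (Real.rpow_le_rpow hm.le (min_le_right _ _) (by linarith))
          (by positivity) (by positivity)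

lemma min_rpow_neg_le_rpow_one_sub_mul_rpow_neg_half {p z σ : ℝ} (hp : 1 ≤ p) (hz : 0 < z)
    (hσ : 0 < σ) : min (z ^ (-p)) (σ ^ (-p / 2)) ≤ z ^ (1 - p) * σ ^ (-1 / 2 : ℝ) := by
  have hp0 : p ≠ 0 := by positivity
  refine (min_le_rpow_mul_rpow (Real.rpow_pos_of_pos hz _) (Real.rpow_pos_of_pos hσ _)
    (θ := (p - 1) / p) (by positivity) (div_le_one_of_le₀ (by linarith) (by positivity))).trans
    (le_of_eq ?_)
  rw [← Real.rpow_mul hz.le, ← Real.rpow_mul hσ.le]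
  congr 2 <;> field_simp <;> ring

lemma rpow_neg_le_min_one_add_rpow_neg {a t p : ℝ} (ha : 0 ≤ a) (ht : 0 ≤ t) (hp : 0 ≤ p) :
    (1 + a + √t) ^ (-p) ≤ min ((1 + a) ^ (-p)) ((1 + t) ^ (-p / 2)) := by
  have hp' : -p ≤ 0 := neg_nonpos.2 hp
  have hsqrt : √(1 + t) ≤ 1 + a + √t := by
    linarith [sqrt_add_le_sqrt_add_sqrt zero_le_one ht, Real.sqrt_one]
  rw [rpow_neg_div_two_eq_sqrt_rpow_neg (by linarith)]
  exact le_min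
    (Real.rpow_le_rpow_of_nonpos (by linarith) (by linarith [Real.sqrt_nonneg t]) hp')
    (Real.rpow_le_rpow_of_nonpos (Real.sqrt_pos.2 (by linarith)) hsqrt hp')

noncomputable def nearSpaceWeight {E : Type*} [NormedAddCommGroup E] (p r : ℝ) : E → ℝ≥0∞ :=
  (ball 0 r).indicator fun w => ENNReal.ofReal (‖w‖ ^ (1 - p))

noncomputable def nearTimeWeight (r : ℝ) : ℝ → ℝ≥0∞ :=
  (Ioc 0 (r ^ 2)).indicator fun τ => ENNReal.ofReal (τ ^ (-1 / 2 : ℝ))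

lemma lintegral_nearSpaceWeight_finrank {E : Type*} [NormedAddCommGroup E]
    [NormedSpace ℝ E] [MeasurableSpace E] [Nontrivial E] (μ : Measure E) [FiniteDimensional ℝ E]
    [BorelSpace E] [μ.IsAddHaarMeasure] {r : ℝ} (hr : 0 ≤ r) :
    ∫⁻ z, nearSpaceWeight (Module.finrank ℝ E) r z ∂μ =
      ENNReal.ofReal (Module.finrank ℝ E * μ.real (ball 0 1) * r) := by
  rw [nearSpaceWeight, lintegral_indicator measurableSet_ball]
  set n := Module.finrank ℝ E
  have hn : 0 < n := Module.finrank_pos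
  have hpow : ∀ y : ℝ, 0 < y → y ^ (n - 1) * y ^ (1 - (n : ℝ)) = 1 := by
    intro y hy
    rw [← Real.rpow_natCast, Nat.cast_sub hn, ← Real.rpow_add hy]
    simp
  -- in polar coordinates the Jacobian `ρ ^ (n - 1)` cancels the integrand
  have hint : IntegrableOn (fun z : E => ‖z‖ ^ (1 - (n : ℝ))) (ball 0 r) μ := by
    refine (integrableOn_fun_norm_addHaar μ (f := fun ρ : ℝ => ρ ^ (1 - (n : ℝ)))).2 ?_
    refine (integrableOn_const (C := (1 : ℝ)) (by simp)).congr_fun (fun y hy => ?_)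
      measurableSet_Ioo
    exact (hpow y hy.1).symm
  rw [← ofReal_integral_eq_lintegral_ofReal hint
    (Filter.Eventually.of_forall fun z => Real.rpow_nonneg (norm_nonneg z) _),
    ← integral_indicator measurableSet_ball]
  have hball : (ball (0 : E) r).indicator (fun z => ‖z‖ ^ (1 - (n : ℝ))) =
      fun z => (Iio r).indicator (fun ρ : ℝ => ρ ^ (1 - (n : ℝ))) ‖z‖ := by
    ext z; simp [indicator]
  rw [hball, integral_fun_norm_addHaar μ, setIntegral_congr_fun measurableSet_Ioi
    (g := (Iio r).indicator 1) fun y hy => ?_]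
  · rw [integral_indicator_one measurableSet_Iio, measureReal_restrict_apply measurableSet_Iio,
      Iio_inter_Ioi, Real.volume_real_Ioo_of_le hr]
    simp [n, smul_eq_mul, mul_assoc]
  · by_cases hyr : y < r <;> simp [hyr, n, hpow y hy]

lemma lintegral_nearTimeWeight {r : ℝ} (hr : 0 ≤ r) :
    ∫⁻ σ, nearTimeWeight r σ = ENNReal.ofReal (2 * r) := by
  rw [nearTimeWeight, lintegral_indicator measurableSet_Ioc]
  have hint : IntervalIntegrable (fun σ : ℝ => σ ^ (-1 / 2 : ℝ)) volume 0 (r ^ 2) :=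
    intervalIntegral.intervalIntegrable_rpow' (by norm_num)
  rw [← ofReal_integral_eq_lintegral_ofReal
      ((intervalIntegrable_iff_integrableOn_Ioc_of_le (sq_nonneg r)).1 hint)
      ((ae_restrict_iff' measurableSet_Ioc).2 (Filter.Eventually.of_forall
        fun σ hσ => Real.rpow_nonneg hσ.1.le _)),
    ← intervalIntegral.integral_of_le (sq_nonneg r), integral_rpow (Or.inl (by norm_num))]
  congr 1
  norm_num [← Real.sqrt_eq_rpow, Real.sqrt_sq hr]
  ring

lemma enorm_integral_integral_le_lintegral_lintegral_enorm {α β G : Type*} [MeasurableSpace α]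
    [MeasurableSpace β] [NormedAddCommGroup G] [NormedSpace ℝ G] (μ : Measure α) (ν : Measure β)
    (F : α → β → G) : ‖∫ a, ∫ b, F a b ∂ν ∂μ‖ₑ ≤ ∫⁻ a, ∫⁻ b, ‖F a b‖ₑ ∂ν ∂μ :=
  (enorm_integral_le_lintegral_enorm _).trans
    (lintegral_mono fun _ => enorm_integral_le_lintegral_enorm _)

lemma ofReal_abs_mul_le_far_add_near {E : Type*} [NormedAddCommGroup E] {p C₀ ε r σ s k φ : ℝ}
    {y z : E} (hp : 1 ≤ p) (hC₀ : 0 ≤ C₀) (hε : 0 ≤ ε) (hr : 0 < r) (hz : z ≠ 0) (hσ : 0 < σ)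
    (hs : 0 ≤ s) (hrM : 3 * r ≤ 1 + ‖z + y‖ + √(σ + s))
    (hk : |k| ≤ C₀ * min (‖z‖ ^ (-p)) (σ ^ (-p / 2)))
    (hφ : |φ| ≤ ε * min ((1 + ‖y‖) ^ (-p - 2)) ((1 + s) ^ (-(p + 2) / 2))) :
    ENNReal.ofReal |k * φ| ≤ ENNReal.ofReal (C₀ * 2 ^ p * r ^ (-p)) * ENNReal.ofReal |φ| +
      ENNReal.ofReal (C₀ * ε * r ^ (-p - 2)) * (nearSpaceWeight p r z * nearTimeWeight r σ) := by
  have hz' : 0 < ‖z‖ := norm_pos_iff.2 hz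
  rw [abs_mul]
  by_cases hfar : r ≤ ‖z‖ + √σ
  · rw [← ENNReal.ofReal_mul (by positivity)]
    refine le_add_right (ENNReal.ofReal_le_ofReal (mul_le_mul_of_nonneg_right ?_ (abs_nonneg _)))
    calc |k| ≤ C₀ * ((‖z‖ + √σ) / 2) ^ (-p) := hk.trans (mul_le_mul_of_nonneg_left
          (min_rpow_neg_le_half_add_sqrt_rpow_neg (k := p) hz' hσ (by linarith)) hC₀)
      _ ≤ C₀ * (r / 2) ^ (-p) := mul_le_mul_of_nonneg_left
          (Real.rpow_le_rpow_of_nonpos (by positivity) (by linarith) (by linarith)) hC₀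
      _ = C₀ * 2 ^ p * r ^ (-p) := by
          rw [Real.div_rpow hr.le zero_le_two, Real.rpow_neg zero_le_two]
          field_simp
  · push Not at hfar
    have hzr : ‖z‖ < r := by linarith [Real.sqrt_nonneg σ]
    have hσr : σ < r ^ 2 := (Real.sqrt_lt' hr).1 (by linarith)
    have hy : r ≤ (1 + ‖y‖ + √(1 + s)) / 2 := by
      have := sqrt_add_le_sqrt_add_sqrt hσ.le hs
      have := Real.sqrt_le_sqrt (by linarith : s ≤ 1 + s)
      linarith [norm_add_le z y]
    have hf : |φ| ≤ ε * r ^ (-p - 2) := by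
      refine hφ.trans (mul_le_mul_of_nonneg_left ?_ hε)
      have := min_rpow_neg_le_half_add_sqrt_rpow_neg (a := 1 + ‖y‖) (b := 1 + s) (k := p + 2)
        (by positivity) (by positivity) (by linarith)
      rw [show -p - 2 = -(p + 2) by ring]
      exact this.trans (Real.rpow_le_rpow_of_nonpos hr hy (by linarith))
    rw [nearSpaceWeight, nearTimeWeight, indicator_of_mem (mem_ball_zero_iff.2 hzr),
      indicator_of_mem (show σ ∈ Ioc 0 (r ^ 2) from ⟨hσ, hσr.le⟩),
      ← ENNReal.ofReal_mul (by positivity), ← ENNReal.ofReal_mul (by positivity),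
      ← ENNReal.ofReal_mul (by positivity)]
    refine le_add_left (ENNReal.ofReal_le_ofReal ?_)
    calc |k| * |φ| ≤ (C₀ * (‖z‖ ^ (1 - p) * σ ^ (-1 / 2 : ℝ))) * (ε * r ^ (-p - 2)) :=
          mul_le_mul (hk.trans (mul_le_mul_of_nonneg_left
            (min_rpow_neg_le_rpow_one_sub_mul_rpow_neg_half hp hz' hσ) hC₀)) hf
            (abs_nonneg _) (by positivity)
      _ = C₀ * ε * r ^ (-p - 2) * (‖z‖ ^ (1 - p) * σ ^ (-1 / 2 : ℝ)) := by ring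

section

variable {d : ℕ} {C₀ ε r t : ℝ} {x : EuclideanSpace ℝ (Fin d)}
  {K f : EuclideanSpace ℝ (Fin d) → ℝ → ℝ}

lemma lintegral_kernel_mul_source_slice_le (hd : 1 ≤ d) (hC₀ : 0 ≤ C₀) (hε : 0 ≤ ε) (hr : 0 < r)
    (hrx : 3 * r ≤ 1 + ‖x‖ + √t)
    (hK : ∀ y : EuclideanSpace ℝ (Fin d), y ≠ 0 → ∀ s : ℝ, 0 < s →
      |K y s| ≤ C₀ * min (‖y‖ ^ (-(d : ℝ))) (s ^ (-(d : ℝ) / 2)))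
    {s : ℝ} (hs : 0 ≤ s) (hst : s < t)
    (hf : ∀ᵐ y, |f y s| ≤ ε * min ((1 + ‖y‖) ^ (-(d : ℝ) - 2)) ((1 + s) ^ (-((d : ℝ) + 2) / 2))) :
    ∫⁻ y, ENNReal.ofReal |K (x - y) (t - s) * f y s| ≤
      ENNReal.ofReal (C₀ * 2 ^ (d : ℝ) * r ^ (-(d : ℝ))) * (∫⁻ y, ENNReal.ofReal |f y s|) +
        ENNReal.ofReal (C₀ * ε * r ^ (-(d : ℝ) - 2) *
          (d * volume.real (ball (0 : EuclideanSpace ℝ (Fin d)) 1) * r)) *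
          nearTimeWeight r (t - s) := by
  have : Nonempty (Fin d) := ⟨⟨0, hd⟩⟩
  have hσ : 0 < t - s := sub_pos.2 hst
  have hG : ∫⁻ y, nearSpaceWeight d r (x - y) =
      ENNReal.ofReal (d * volume.real (ball (0 : EuclideanSpace ℝ (Fin d)) 1) * r) := by
    rw [lintegral_sub_left_eq_self (nearSpaceWeight (d : ℝ) r) x]
    simpa using lintegral_nearSpaceWeight_finrank
      (volume : Measure (EuclideanSpace ℝ (Fin d))) hr.le
  calc ∫⁻ y, ENNReal.ofReal |K (x - y) (t - s) * f y s|
      ≤ ∫⁻ y, ENNReal.ofReal (C₀ * 2 ^ (d : ℝ) * r ^ (-(d : ℝ))) * ENNReal.ofReal |f y s| +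
          ENNReal.ofReal (C₀ * ε * r ^ (-(d : ℝ) - 2)) *
            (nearSpaceWeight d r (x - y) * nearTimeWeight r (t - s)) := by
        refine lintegral_mono_ae ?_
        filter_upwards [hf, compl_mem_ae_iff.2 (measure_singleton x)] with y hy hyx
        have hxy : x - y ≠ 0 := sub_ne_zero.2 (Ne.symm hyx)
        exact ofReal_abs_mul_le_far_add_near (by exact_mod_cast hd) hC₀ hε hr hxy hσ hs
          (by simpa using hrx) (hK _ hxy _ hσ) hy
    _ = _ := by
        have hGm : Measurable (nearSpaceWeight (E := EuclideanSpace ℝ (Fin d)) d r) :=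
          Measurable.indicator (by fun_prop) measurableSet_ball
        rw [lintegral_add_right _ (by fun_prop), lintegral_const_mul' _ _ ENNReal.ofReal_ne_top,
          lintegral_const_mul _ (by fun_prop), lintegral_mul_const _ (by fun_prop), hG,
          ENNReal.ofReal_mul (p := C₀ * ε * r ^ (-(d : ℝ) - 2)) (by positivity)]
        ring

lemma lintegral_lintegral_kernel_mul_source_le (hd : 1 ≤ d) (hC₀ : 0 ≤ C₀) (hε : 0 ≤ ε)
    (hr : 0 < r) (hrx : 3 * r ≤ 1 + ‖x‖ + √t)
    (hK : ∀ y : EuclideanSpace ℝ (Fin d), y ≠ 0 → ∀ s : ℝ, 0 < s →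
      |K y s| ≤ C₀ * min (‖y‖ ^ (-(d : ℝ))) (s ^ (-(d : ℝ) / 2)))
    (hf : ∀ᵐ p : EuclideanSpace ℝ (Fin d) × ℝ ∂volume, 0 ≤ p.2 →
      |f p.1 p.2| ≤ ε * min ((1 + ‖p.1‖) ^ (-(d : ℝ) - 2)) ((1 + p.2) ^ (-((d : ℝ) + 2) / 2)))
    (hfL1 : ∫⁻ s in Ioi 0, ∫⁻ y, ENNReal.ofReal |f y s| ≤ ENNReal.ofReal ε) :
    ∫⁻ s in Ioc 0 t, ∫⁻ y, ENNReal.ofReal |K (x - y) (t - s) * f y s| ≤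
      ENNReal.ofReal (C₀ * (2 ^ (d : ℝ) +
        2 * d * volume.real (ball (0 : EuclideanSpace ℝ (Fin d)) 1)) * ε * r ^ (-(d : ℝ))) := by
  set ω := volume.real (ball (0 : EuclideanSpace ℝ (Fin d)) 1)
  set A := ENNReal.ofReal (C₀ * 2 ^ (d : ℝ) * r ^ (-(d : ℝ)))
  set B := ENNReal.ofReal (C₀ * ε * r ^ (-(d : ℝ) - 2) * (d * ω * r))
  have hHm : Measurable (nearTimeWeight r) := Measurable.indicator (by fun_prop) measurableSet_Ioc
  have hH : ∫⁻ s in Ioc 0 t, nearTimeWeight r (t - s) ≤ ENNReal.ofReal (2 * r) :=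
    (setLIntegral_le_lintegral _ _).trans_eq
      ((lintegral_sub_left_eq_self _ t).trans (lintegral_nearTimeWeight hr.le))
  have hf' : ∀ᵐ s ∂volume.restrict (Ioc 0 t), ∀ᵐ y, 0 ≤ s →
      |f y s| ≤ ε * min ((1 + ‖y‖) ^ (-(d : ℝ) - 2)) ((1 + s) ^ (-((d : ℝ) + 2) / 2)) := by
    rw [Measure.volume_eq_prod] at hf
    exact ae_restrict_of_ae (Measure.ae_ae_of_ae_prod
      (Measure.measurePreserving_swap.quasiMeasurePreserving.ae hf))
  calc ∫⁻ s in Ioc 0 t, ∫⁻ y, ENNReal.ofReal |K (x - y) (t - s) * f y s|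
      ≤ ∫⁻ s in Ioc 0 t, A * (∫⁻ y, ENNReal.ofReal |f y s|) + B * nearTimeWeight r (t - s) := by
        refine lintegral_mono_ae ?_
        filter_upwards [hf', ae_restrict_mem measurableSet_Ioc,
          ae_restrict_of_ae (compl_mem_ae_iff.2 (measure_singleton t))] with s hfs hs hst
        exact lintegral_kernel_mul_source_slice_le hd hC₀ hε hr hrx hK hs.1.le
          (lt_of_le_of_ne hs.2 hst) (hfs.mono fun y hy => hy hs.1.le)
    _ = A * (∫⁻ s in Ioc 0 t, ∫⁻ y, ENNReal.ofReal |f y s|) +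
          B * ∫⁻ s in Ioc 0 t, nearTimeWeight r (t - s) := by
        rw [lintegral_add_right _ (by fun_prop), lintegral_const_mul' _ _ ENNReal.ofReal_ne_top,
          lintegral_const_mul _ (by fun_prop)]
    _ ≤ A * ENNReal.ofReal ε + B * ENNReal.ofReal (2 * r) := by
        gcongr
        exact (lintegral_mono_set Ioc_subset_Ioi_self).trans hfL1
    _ = ENNReal.ofReal (C₀ * (2 ^ (d : ℝ) + 2 * d * ω) * ε * r ^ (-(d : ℝ))) := by
        have hω : 0 ≤ ω := measureReal_nonneg
        rw [← ENNReal.ofReal_mul (by positivity), ← ENNReal.ofReal_mul (by positivity),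
          ← ENNReal.ofReal_add (by positivity) (by positivity), Real.rpow_sub hr, Real.rpow_two]
        congr 1
        field_simp

end

/-- Let `K` satisfy `|K(y,s)| ≤ C₀ min(‖y‖^{−d}, s^{−d/2})` and let `f`
satisfy `|f(y,s)| ≤ ε min((1+‖y‖)^{−d−2}, (1+s)^{−(d+2)/2})` a.e. together with
`∫₀^∞∫|f| ≤ ε`. Then there is `C > 0`, depending only on `d` and `C₀`, with
`|∫₀^t ∫ K(x−y,t−s) f(y,s) dy ds| ≤ C ε min((1+‖x‖)^{−d}, (1+t)^{−d/2})`
for all `t > 0` and all `x`. -/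
theorem stmt4 (d : ℕ) (hd : 2 ≤ d) (C₀ : ℝ) (hC₀ : 0 < C₀) :
    ∃ C > (0 : ℝ), ∀ ε : ℝ, 0 < ε →
      ∀ K : EuclideanSpace ℝ (Fin d) → ℝ → ℝ, Measurable (Function.uncurry K) →
      (∀ y : EuclideanSpace ℝ (Fin d), y ≠ 0 → ∀ s : ℝ, 0 < s →
        |K y s| ≤ C₀ * min (‖y‖ ^ (-(d : ℝ))) (s ^ (-(d : ℝ) / 2))) →
      ∀ f : EuclideanSpace ℝ (Fin d) → ℝ → ℝ, Measurable (Function.uncurry f) →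
      (∀ᵐ p : EuclideanSpace ℝ (Fin d) × ℝ ∂volume, 0 ≤ p.2 →
        |f p.1 p.2| ≤ ε * min ((1 + ‖p.1‖) ^ (-(d : ℝ) - 2)) ((1 + p.2) ^ (-((d : ℝ) + 2) / 2))) →
      (∫⁻ s in Set.Ioi (0 : ℝ), ∫⁻ y, ENNReal.ofReal |f y s|) ≤ ENNReal.ofReal ε →
      ∀ t : ℝ, 0 < t → ∀ x : EuclideanSpace ℝ (Fin d),
        |∫ s in Set.Ioc (0 : ℝ) t, ∫ y, K (x - y) (t - s) * f y s| ≤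
          C * ε * min ((1 + ‖x‖) ^ (-(d : ℝ))) ((1 + t) ^ (-(d : ℝ) / 2)) := by
  set ω := volume.real (ball (0 : EuclideanSpace ℝ (Fin d)) 1)
  have hω : 0 ≤ ω := measureReal_nonneg
  refine ⟨C₀ * (2 ^ (d : ℝ) + 2 * d * ω) * 3 ^ (d : ℝ), by positivity, ?_⟩
  intro ε hε K _ hK f _ hf hfL1 t ht x
  set M := 1 + ‖x‖ + √t
  have hM : 0 < M := by positivity
  have hL := lintegral_lintegral_kernel_mul_source_le (by omega) hC₀.le hε.le
    (div_pos hM three_pos) (le_of_eq (mul_div_cancel₀ M three_ne_zero)) hK hf hfL1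
  have hI := enorm_integral_integral_le_lintegral_lintegral_enorm (volume.restrict (Ioc 0 t))
    volume fun s y => K (x - y) (t - s) * f y s
  simp only [Real.enorm_eq_ofReal_abs] at hI
  calc |∫ s in Ioc 0 t, ∫ y, K (x - y) (t - s) * f y s|
      ≤ C₀ * (2 ^ (d : ℝ) + 2 * d * ω) * ε * (M / 3) ^ (-(d : ℝ)) :=
        (ENNReal.ofReal_le_ofReal_iff (by positivity)).1 (hI.trans hL)
    _ = C₀ * (2 ^ (d : ℝ) + 2 * d * ω) * 3 ^ (d : ℝ) * ε * M ^ (-(d : ℝ)) := by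
        rw [Real.div_rpow hM.le zero_le_three, Real.rpow_neg zero_le_three]
        field_simp
    _ ≤ C₀ * (2 ^ (d : ℝ) + 2 * d * ω) * 3 ^ (d : ℝ) * ε *
          min ((1 + ‖x‖) ^ (-(d : ℝ))) ((1 + t) ^ (-(d : ℝ) / 2)) := by
        gcongr
        exact rpow_neg_le_min_one_add_rpow_neg (norm_nonneg x) ht.le (Nat.cast_nonneg d)
end

section
/- Let d ≥ 1 be an integer and M > 0, let t ≥ 0, and let u : ℝ^d → ℝ^d be measurable with |u(x)| ≤ M·min((1+‖x‖)^{−d}, (1+t)^{−d/2}) for a.e. x. Then for every α ≥ 0 and every p with 1 < p ≤ ∞ such that α + d/p < d (convention d/∞ = 0), there is a constant C > 0 depending only on d, α, p such that ‖(1+‖x‖)^α·u‖_{L^p(ℝ^d)} ≤ C·M·(1+t)^{−(1/2)(d−α−d/p)}. Moreover the same estimate holds in the limit case (α,p) = (d,∞): ess sup_x (1+‖x‖)^d·|u(x)| ≤ C·M. -/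
open MeasureTheory Module
open scoped ENNReal

/-!
With `s = (1 + t) ^ (1/2)`, the larger of `1 + ‖x‖` and `s` is at least `(s + ‖x‖) / 2`, so the
two decay hypotheses merge into `(1 + ‖x‖) ^ α |u x| ≤ 2 ^ d M (s + ‖x‖) ^ (α - d)`. The
substitution `x = s y` shows that the `L^p` norm of `(s + ‖x‖) ^ (α - d)` is
`s ^ (α - d + d/p)` times that of `(1 + ‖y‖) ^ (α - d)`, which is finite exactly when
`α + d/p < d`. In the limit case `(d, ∞)` the first decay bound alone suffices.
-/

theorem min_rpow_neg_le_two_rpow_mul {γ s r : ℝ} (hγ : 0 ≤ γ) (hs : 0 < s) (hr : 0 ≤ r) :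
    min ((1 + r) ^ (-γ)) (s ^ (-γ)) ≤ 2 ^ γ * (s + r) ^ (-γ) := by
  have hhalf : 2 ^ γ * (s + r) ^ (-γ) = ((s + r) / 2) ^ (-γ) := by
    rw [Real.div_rpow (by positivity) zero_le_two, Real.rpow_neg zero_le_two,
      div_inv_eq_mul, mul_comm]
  rw [hhalf]
  rcases le_total (1 + r) s with h | h
  · exact (min_le_right _ _).trans
      (Real.rpow_le_rpow_of_nonpos (by positivity) (by linarith) (by linarith))
  · exact (min_le_left _ _).trans
      (Real.rpow_le_rpow_of_nonpos (by positivity) (by linarith) (by linarith))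

theorem one_add_rpow_mul_min_le {α γ s r : ℝ} (hα : 0 ≤ α) (hγ : 0 ≤ γ) (hs : 1 ≤ s)
    (hr : 0 ≤ r) :
    (1 + r) ^ α * min ((1 + r) ^ (-γ)) (s ^ (-γ)) ≤ 2 ^ γ * (s + r) ^ (α - γ) := by
  have hsr : 0 < s + r := by linarith
  calc (1 + r) ^ α * min ((1 + r) ^ (-γ)) (s ^ (-γ))
      ≤ (s + r) ^ α * (2 ^ γ * (s + r) ^ (-γ)) := by
        gcongr ?_ * ?_
        · exact Real.rpow_le_rpow (by linarith) (by linarith) hα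
        · exact min_rpow_neg_le_two_rpow_mul hγ (by linarith) hr
    _ = 2 ^ γ * (s + r) ^ (α - γ) := by
        rw [mul_left_comm, ← Real.rpow_add hsr, sub_eq_add_neg]

section AddHaar

variable {E F : Type*} [NormedAddCommGroup E] [NormedSpace ℝ E] [FiniteDimensional ℝ E]
  [MeasurableSpace E] [BorelSpace E] [NormedAddCommGroup F]
  (μ : Measure E) [μ.IsAddHaarMeasure]

theorem eLpNorm_comp_inv_smul {f : E → F} (hf : AEStronglyMeasurable f μ) (p : ℝ≥0∞)
    {s : ℝ} (hs : 0 < s) :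
    eLpNorm (fun x => f (s⁻¹ • x)) p μ
      = ENNReal.ofReal (s ^ (finrank ℝ E / p.toReal)) * eLpNorm f p μ := by
  have hmap : Measure.map (s⁻¹ • ·) μ = ENNReal.ofReal (s ^ finrank ℝ E) • μ := by
    rw [Measure.map_addHaar_smul μ (inv_ne_zero hs.ne'), inv_pow, inv_inv,
      abs_of_pos (by positivity)]
  have hf' : AEStronglyMeasurable f (Measure.map (s⁻¹ • ·) μ) := by
    rw [hmap]; exact hf.smul_measure _
  rw [← Function.comp_def, ← eLpNorm_map_measure hf' (by fun_prop), hmap,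
    eLpNorm_smul_measure_of_ne_zero (by simp [hs]), smul_eq_mul,
    ENNReal.ofReal_rpow_of_pos (by positivity), ← Real.rpow_natCast, ← Real.rpow_mul hs.le,
    ENNReal.toReal_div, ENNReal.toReal_one, mul_one_div]

theorem eLpNorm_add_norm_rpow (p : ℝ≥0∞) (σ : ℝ) {s : ℝ} (hs : 0 < s) :
    eLpNorm (fun x : E => (s + ‖x‖) ^ σ) p μ
      = ENNReal.ofReal (s ^ (σ + finrank ℝ E / p.toReal)) *
          eLpNorm (fun x : E => (1 + ‖x‖) ^ σ) p μ := by
  have hscale (x : E) : (s + ‖x‖) ^ σ = s ^ σ * (1 + ‖s⁻¹ • x‖) ^ σ := by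
    rw [← Real.mul_rpow hs.le (by positivity), norm_smul, Real.norm_of_nonneg (by positivity)]
    field_simp
  have hmeas : AEStronglyMeasurable (fun x : E => (1 + ‖x‖) ^ σ) μ :=
    (by fun_prop : Measurable fun x : E => (1 + ‖x‖) ^ σ).aestronglyMeasurable
  simp_rw [hscale]
  rw [show (fun x : E => s ^ σ * (1 + ‖s⁻¹ • x‖) ^ σ) = s ^ σ • fun x => (1 + ‖s⁻¹ • x‖) ^ σ
    from rfl, eLpNorm_const_smul, eLpNorm_comp_inv_smul μ hmeas p hs, ← mul_assoc,
    Real.enorm_eq_ofReal (by positivity), ← ENNReal.ofReal_mul (by positivity), ← Real.rpow_add hs]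

theorem memLp_one_add_norm_rpow {p : ℝ≥0∞} {σ : ℝ} (hσ : σ + finrank ℝ E / p.toReal < 0) :
    MemLp (fun x : E => (1 + ‖x‖) ^ σ) p μ := by
  have hmeas : AEStronglyMeasurable (fun x : E => (1 + ‖x‖) ^ σ) μ :=
    (by fun_prop : Measurable fun x : E => (1 + ‖x‖) ^ σ).aestronglyMeasurable
  rcases eq_or_ne p 0 with rfl | hp0
  · exact memLp_zero_iff_aestronglyMeasurable.mpr hmeas
  rcases eq_or_ne p ⊤ with rfl | hptop
  · refine memLp_top_of_bound hmeas 1 (.of_forall fun x => ?_)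
    simp only [ENNReal.toReal_top, div_zero, add_zero] at hσ
    rw [Real.norm_of_nonneg (by positivity)]
    exact Real.rpow_le_one_of_one_le_of_nonpos (by simp) hσ.le
  have hq : 0 < p.toReal := ENNReal.toReal_pos hp0 hptop
  rw [← memLp_norm_rpow_iff hmeas hp0 hptop, ENNReal.div_self hp0 hptop, memLp_one_iff_integrable]
  have hint := integrable_one_add_norm (μ := μ) (r := -(σ * p.toReal)) (by
    have := (div_lt_iff₀ hq).mp (by linarith : finrank ℝ E / p.toReal < -σ)
    linarith)
  refine hint.congr (.of_forall fun x => ?_)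
  simp only [neg_neg]
  rw [Real.norm_of_nonneg (by positivity), ← Real.rpow_mul (by positivity)]

variable [NormedSpace ℝ F]

theorem eLpNorm_rpow_smul_le_of_le_min {u : E → F} {α γ s M : ℝ} (p : ℝ≥0∞) (hα : 0 ≤ α)
    (hγ : 0 ≤ γ) (hs : 1 ≤ s) (hM : 0 ≤ M)
    (hu : ∀ᵐ x ∂μ, ‖u x‖ ≤ M * min ((1 + ‖x‖) ^ (-γ)) (s ^ (-γ))) :
    eLpNorm (fun x => (1 + ‖x‖) ^ α • u x) p μ
      ≤ ENNReal.ofReal (2 ^ γ * M * s ^ (α - γ + finrank ℝ E / p.toReal)) *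
          eLpNorm (fun x : E => (1 + ‖x‖) ^ (α - γ)) p μ := by
  calc eLpNorm (fun x => (1 + ‖x‖) ^ α • u x) p μ
      ≤ eLpNorm ((2 ^ γ * M) • fun x : E => (s + ‖x‖) ^ (α - γ)) p μ := by
        refine eLpNorm_mono_ae_real (hu.mono fun x hx => ?_)
        rw [norm_smul, Real.norm_of_nonneg (by positivity), Pi.smul_apply, smul_eq_mul]
        calc (1 + ‖x‖) ^ α * ‖u x‖
            ≤ (1 + ‖x‖) ^ α * (M * min ((1 + ‖x‖) ^ (-γ)) (s ^ (-γ))) := by gcongr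
          _ = M * ((1 + ‖x‖) ^ α * min ((1 + ‖x‖) ^ (-γ)) (s ^ (-γ))) := by ring
          _ ≤ M * (2 ^ γ * (s + ‖x‖) ^ (α - γ)) := by
              gcongr M * ?_; exact one_add_rpow_mul_min_le hα hγ hs (norm_nonneg x)
          _ = 2 ^ γ * M * (s + ‖x‖) ^ (α - γ) := by ring
    _ = _ := by
        rw [eLpNorm_const_smul, eLpNorm_add_norm_rpow μ p _ (by linarith), ← mul_assoc,
          Real.enorm_eq_ofReal (by positivity), ← ENNReal.ofReal_mul (by positivity), mul_assoc]

theorem norm_one_add_norm_rpow_smul_le {v : F} {γ r M : ℝ} (hr : 0 ≤ r)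
    (hv : ‖v‖ ≤ M * (1 + r) ^ (-γ)) : ‖(1 + r) ^ γ • v‖ ≤ M := by
  have hr1 : 0 < 1 + r := by linarith
  calc ‖(1 + r) ^ γ • v‖ = (1 + r) ^ γ * ‖v‖ := by
        rw [norm_smul, Real.norm_of_nonneg (by positivity)]
    _ ≤ (1 + r) ^ γ * (M * (1 + r) ^ (-γ)) := by gcongr
    _ = M := by rw [mul_left_comm, ← Real.rpow_add hr1, add_neg_cancel, Real.rpow_zero, mul_one]

end AddHaar

theorem stmt6_general (d : ℕ) :
    (∀ α : ℝ, 0 ≤ α → ∀ p : ℝ≥0∞, 1 < p → α + d / p.toReal < d →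
      ∃ C > (0 : ℝ), ∀ M : ℝ, 0 < M → ∀ t : ℝ, 0 ≤ t →
        ∀ u : EuclideanSpace ℝ (Fin d) → EuclideanSpace ℝ (Fin d), Measurable u →
        (∀ᵐ x : EuclideanSpace ℝ (Fin d) ∂volume,
          ‖u x‖ ≤ M * min ((1 + ‖x‖) ^ (-(d : ℝ))) ((1 + t) ^ (-(d : ℝ) / 2))) →
        eLpNorm (fun x => (1 + ‖x‖) ^ α • u x) p volume ≤
          ENNReal.ofReal (C * M * (1 + t) ^ (-(1 / 2 : ℝ) * ((d : ℝ) - α - d / p.toReal)))) ∧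
    (∃ C > (0 : ℝ), ∀ M : ℝ, 0 < M → ∀ t : ℝ, 0 ≤ t →
      ∀ u : EuclideanSpace ℝ (Fin d) → EuclideanSpace ℝ (Fin d), Measurable u →
      (∀ᵐ x : EuclideanSpace ℝ (Fin d) ∂volume,
        ‖u x‖ ≤ M * min ((1 + ‖x‖) ^ (-(d : ℝ))) ((1 + t) ^ (-(d : ℝ) / 2))) →
      eLpNorm (fun x => (1 + ‖x‖) ^ (d : ℝ) • u x) ⊤ volume ≤ ENNReal.ofReal (C * M)) := by
  have hdim : finrank ℝ (EuclideanSpace ℝ (Fin d)) = d := finrank_euclideanSpace_fin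
  refine ⟨fun α hα p _ hαp => ?_, ⟨1, one_pos, fun M _ t _ u _ hu => ?_⟩⟩
  · set K := eLpNorm (fun x : EuclideanSpace ℝ (Fin d) => (1 + ‖x‖) ^ (α - d)) p volume
      with hK_def
    have hK : K ≠ ⊤ := (memLp_one_add_norm_rpow volume (by rw [hdim]; linarith)).eLpNorm_ne_top
    refine ⟨2 ^ (d : ℝ) * (K.toReal + 1), by positivity, fun M hM t ht u _ hu => ?_⟩
    have hs : 1 ≤ (1 + t) ^ (1 / 2 : ℝ) := Real.one_le_rpow (by linarith) (by norm_num)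
    have hpow (β : ℝ) : ((1 + t) ^ (1 / 2 : ℝ)) ^ β = (1 + t) ^ (β / 2) := by
      rw [← Real.rpow_mul (by linarith), one_div_mul_eq_div]
    rw [← hpow] at hu
    refine (eLpNorm_rpow_smul_le_of_le_min volume p hα (Nat.cast_nonneg d) hs hM.le hu).trans ?_
    rw [hdim, hpow, ← hK_def]
    calc _ ≤ ENNReal.ofReal (2 ^ (d : ℝ) * M * (1 + t) ^ ((α - d + d / p.toReal) / 2)) *
          ENNReal.ofReal (K.toReal + 1) := by
          gcongr
          exact (ENNReal.le_ofReal_iff_toReal_le hK (by positivity)).2 (by linarith)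
      _ = _ := by
          rw [← ENNReal.ofReal_mul (by positivity)]
          congr 1
          ring_nf
  · rw [eLpNorm_exponent_top, one_mul]
    refine eLpNormEssSup_le_of_ae_bound (hu.mono fun x hx => ?_)
    exact norm_one_add_norm_rpow_smul_le (norm_nonneg x)
      (hx.trans (by gcongr; exact min_le_left _ _))

/-- If `|u(x)| ≤ M min((1+‖x‖)^{−d}, (1+t)^{−d/2})` a.e., then for all
`α ≥ 0` and `1 < p ≤ ∞` with `α + d/p < d` (convention `d/∞ = 0`, realized by
`p.toReal`), there is `C > 0` depending only on `d, α, p` with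
`‖(1+‖x‖)^α u‖_{L^p} ≤ C M (1+t)^{−(1/2)(d−α−d/p)}`; moreover the same holds in
the limit case `(α,p) = (d,∞)`: `ess sup (1+‖x‖)^d |u(x)| ≤ C M`. -/
theorem stmt6 (d : ℕ) (hd : 1 ≤ d) :
    (∀ α : ℝ, 0 ≤ α → ∀ p : ℝ≥0∞, 1 < p → α + d / p.toReal < d →
      ∃ C > (0 : ℝ), ∀ M : ℝ, 0 < M → ∀ t : ℝ, 0 ≤ t →
        ∀ u : EuclideanSpace ℝ (Fin d) → EuclideanSpace ℝ (Fin d), Measurable u →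
        (∀ᵐ x : EuclideanSpace ℝ (Fin d) ∂volume,
          ‖u x‖ ≤ M * min ((1 + ‖x‖) ^ (-(d : ℝ))) ((1 + t) ^ (-(d : ℝ) / 2))) →
        eLpNorm (fun x => (1 + ‖x‖) ^ α • u x) p volume ≤
          ENNReal.ofReal (C * M * (1 + t) ^ (-(1 / 2 : ℝ) * ((d : ℝ) - α - d / p.toReal)))) ∧
    (∃ C > (0 : ℝ), ∀ M : ℝ, 0 < M → ∀ t : ℝ, 0 ≤ t →
      ∀ u : EuclideanSpace ℝ (Fin d) → EuclideanSpace ℝ (Fin d), Measurable u →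
      (∀ᵐ x : EuclideanSpace ℝ (Fin d) ∂volume,
        ‖u x‖ ≤ M * min ((1 + ‖x‖) ^ (-(d : ℝ))) ((1 + t) ^ (-(d : ℝ) / 2))) →
      eLpNorm (fun x => (1 + ‖x‖) ^ (d : ℝ) • u x) ⊤ volume ≤ ENNReal.ofReal (C * M)) :=
  stmt6_general d
end

section
/- Let d ≥ 1 be an integer. There exists a constant C > 0 depending only on d with the following property: for every ε > 0 and every measurable a : ℝ^d → ℝ with ∫_{ℝ^d} |a(y)| dy ≤ ε and |a(y)| ≤ ε·(1+‖y‖)^{−d} for a.e. y, one has for all t > 0 and all x ∈ ℝ^d the pointwise bound |(g_t ⋆ a)(x)| ≤ C·ε·min((1+‖x‖)^{−d}, (1+t)^{−d/2}). -/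
/-!
The heat kernel `g_t` is a probability density bounded by `(4πt)^{-d/2}`, so
`|g_t ⋆ a| ≤ g_t ⋆ |a|` is at most `sup |a| ≤ ε` and at most `(4πt)^{-d/2} ‖a‖₁ ≤ (4πt)^{-d/2} ε`;
together these give the decay `(1 + t)^{-d/2}`. For the decay in `x`, split the integral at
`‖y‖ = ‖x‖ / 2`: where `‖y‖ ≥ ‖x‖ / 2` the hypothesis gives `|a y| ≲ ε (1 + ‖x‖)^{-d}`, and where
`‖y‖ < ‖x‖ / 2` we have `‖x - y‖ ≥ ‖x‖ / 2`, so
`g_t (x - y) ≤ (4πt)^{-d/2} exp (-‖x‖² / (16 t)) ≲ ‖x‖^{-d}` uniformly in `t`.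
-/

open MeasureTheory Real Module
open scoped Nat

theorem rpow_neg_le_two_rpow_mul_rpow_neg {A B s : ℝ} (hA : 0 < A) (hs : 0 ≤ s)
    (hAB : A / 2 ≤ B) : B ^ (-s) ≤ 2 ^ s * A ^ (-s) :=
  calc B ^ (-s) ≤ (A / 2) ^ (-s) := rpow_le_rpow_of_nonpos (by positivity) hAB (by linarith)
    _ = 2 ^ s * A ^ (-s) := by
      rw [div_rpow hA.le zero_le_two, rpow_neg zero_le_two, div_inv_eq_mul, mul_comm]

theorem one_le_two_rpow_mul_one_add_rpow_neg {s u : ℝ} (hs : 0 ≤ s) (hu₀ : 0 ≤ u)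
    (hu₁ : u ≤ 1) : 1 ≤ 2 ^ s * (1 + u) ^ (-s) := by
  simpa using rpow_neg_le_two_rpow_mul_rpow_neg (B := 1) (by positivity) hs (by linarith)

theorem rpow_half_mul_exp_neg_le (d : ℕ) {u : ℝ} (hu : 0 ≤ u) :
    u ^ ((d : ℝ) / 2) * exp (-u) ≤ 1 + d ! := by
  have h_rpow : u ^ ((d : ℝ) / 2) ≤ 1 + u ^ d := by
    rcases le_or_gt u 1 with h | h
    · linarith [rpow_le_one hu h (by positivity : (0 : ℝ) ≤ d / 2), pow_nonneg hu d]
    · have := rpow_le_rpow_of_exponent_le h.le (by linarith [d.cast_nonneg (α := ℝ)] :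
        (d : ℝ) / 2 ≤ d)
      rw [rpow_natCast] at this
      linarith
  have h_pow : u ^ d * exp (-u) ≤ d ! := by
    have := pow_div_factorial_le_exp (x := u) hu d
    rw [div_le_iff₀ (by positivity)] at this
    rw [exp_neg, mul_inv_le_iff₀ (exp_pos u)]
    linarith
  have h_exp : exp (-u) ≤ 1 := exp_le_one_iff.2 (by linarith)
  nlinarith [exp_pos (-u)]

noncomputable def heatTailConst (d : ℕ) : ℝ := (4 / π) ^ ((d : ℝ) / 2) * (1 + d !)

theorem heatTailConst_pos (d : ℕ) : 0 < heatTailConst d := by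
  unfold heatTailConst; have := pi_pos; positivity

theorem rpow_mul_exp_neg_sq_div_le (d : ℕ) {r t : ℝ} (hr : 0 < r) (ht : 0 < t) :
    (4 * π * t) ^ (-(d : ℝ) / 2) * exp (-r ^ 2 / (16 * t)) ≤
      heatTailConst d * r ^ (-(d : ℝ)) := by
  have hπ := pi_pos
  set u := r ^ 2 / (16 * t) with hu_def
  have hu : 0 < u := by positivity
  have h_eq : (4 * π * t) ^ (-(d : ℝ) / 2) * exp (-r ^ 2 / (16 * t)) =
      (4 / π) ^ ((d : ℝ) / 2) * (u ^ ((d : ℝ) / 2) * exp (-u)) * r ^ (-(d : ℝ)) := by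
    have h_r : r ^ (-(d : ℝ)) = ((r ^ 2) ^ ((d : ℝ) / 2))⁻¹ := by
      rw [← rpow_natCast, ← rpow_mul hr.le, ← rpow_neg (by positivity)]; ring_nf
    have h_u : 4 / π * u = r ^ 2 / (4 * π * t) := by rw [hu_def]; field_simp; ring
    rw [h_r, ← mul_assoc, ← mul_rpow (by positivity) hu.le, h_u, div_rpow (by positivity)
      (by positivity), neg_div, rpow_neg (by positivity), neg_div]
    have : 0 < (r ^ 2) ^ ((d : ℝ) / 2) := by positivity
    field_simp
    rw [hu_def]; ring_nf
  rw [h_eq, heatTailConst]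
  gcongr
  exact rpow_half_mul_exp_neg_le d hu.le

theorem ae_le_of_ae_le_mul_rpow_neg {α : Type*} [MeasurableSpace α] {μ : Measure α}
    {f g : α → ℝ} {ε s : ℝ} (hε : 0 ≤ ε) (hs : 0 ≤ s) (hg : ∀ y, 1 ≤ g y)
    (h : ∀ᵐ y ∂μ, f y ≤ ε * g y ^ (-s)) : ∀ᵐ y ∂μ, f y ≤ ε :=
  h.mono fun y hy ↦ hy.trans <|
    mul_le_of_le_one_right hε (rpow_le_one_of_one_le_of_nonpos (hg y) (by linarith))

section HeatKernel

variable {V : Type*} [NormedAddCommGroup V] {d : ℕ} {t : ℝ}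

noncomputable def heatKernel (d : ℕ) (t : ℝ) (x : V) : ℝ :=
  (4 * π * t) ^ (-(d : ℝ) / 2) * exp (-‖x‖ ^ 2 / (4 * t))

theorem heatKernel_nonneg (ht : 0 ≤ t) (x : V) : 0 ≤ heatKernel d t x := by
  unfold heatKernel; have := pi_pos; positivity

theorem heatKernel_le (ht : 0 ≤ t) (x : V) :
    heatKernel d t x ≤ (4 * π * t) ^ (-(d : ℝ) / 2) := by
  have := pi_pos
  refine mul_le_of_le_one_right (by positivity) (exp_le_one_iff.2 ?_)
  exact div_nonpos_of_nonpos_of_nonneg (by simp) (by positivity)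

theorem heatKernel_le_heatTailConst_mul (ht : 0 < t) {r : ℝ} (hr : 0 < r) {x : V}
    (hx : r ≤ 2 * ‖x‖) : heatKernel d t x ≤ heatTailConst d * r ^ (-(d : ℝ)) := by
  refine le_trans ?_ (rpow_mul_exp_neg_sq_div_le d hr ht)
  have := pi_pos
  refine mul_le_mul_of_nonneg_left (exp_le_exp.2 ?_) (by positivity)
  rw [neg_div, neg_div, neg_le_neg_iff, div_le_div_iff₀ (by positivity) (by positivity)]
  nlinarith [sq_le_sq' (by linarith) hx]

theorem heatKernel_mul_le_add (ht : 0 < t) {x y : V} (hx : 0 < ‖x‖) {ε b : ℝ} (hε : 0 ≤ ε)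
    (hb₀ : 0 ≤ b) (hb : b ≤ ε * (1 + ‖y‖) ^ (-(d : ℝ))) :
    heatKernel d t (x - y) * b ≤
      ε * 2 ^ (d : ℝ) * (1 + ‖x‖) ^ (-(d : ℝ)) * heatKernel d t (x - y) +
        heatTailConst d * ‖x‖ ^ (-(d : ℝ)) * b := by
  have hK := heatKernel_nonneg (d := d) ht.le (x - y)
  have h_tail : 0 ≤ heatTailConst d * ‖x‖ ^ (-(d : ℝ)) * b := by
    have := heatTailConst_pos d; positivity
  rcases le_or_gt (‖x‖ / 2) ‖y‖ with hy | hy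
  · have h_decay : (1 + ‖y‖) ^ (-(d : ℝ)) ≤ 2 ^ (d : ℝ) * (1 + ‖x‖) ^ (-(d : ℝ)) :=
      rpow_neg_le_two_rpow_mul_rpow_neg (by positivity) d.cast_nonneg (by linarith)
    have : b ≤ ε * 2 ^ (d : ℝ) * (1 + ‖x‖) ^ (-(d : ℝ)) := by
      rw [mul_assoc]; exact hb.trans (mul_le_mul_of_nonneg_left h_decay hε)
    nlinarith
  · have h_far : heatKernel d t (x - y) ≤ heatTailConst d * ‖x‖ ^ (-(d : ℝ)) :=
      heatKernel_le_heatTailConst_mul ht hx (by linarith [norm_sub_norm_le x y])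
    have : 0 ≤ ε * 2 ^ (d : ℝ) * (1 + ‖x‖) ^ (-(d : ℝ)) * heatKernel d t (x - y) := by
      positivity
    nlinarith

variable [InnerProductSpace ℝ V] [FiniteDimensional ℝ V] [MeasurableSpace V] [BorelSpace V]

theorem integral_heatKernel (hV : finrank ℝ V = d) (ht : 0 < t) :
    ∫ x : V, heatKernel d t x = 1 := by
  have h := GaussianFourier.integral_rexp_neg_mul_sq_norm (V := V)
    (inv_pos.2 (by positivity : 0 < 4 * t))
  simp only [heatKernel, integral_const_mul, neg_div, div_eq_inv_mul (‖_‖ ^ 2), ← neg_mul, h, hV]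
  rw [div_inv_eq_mul, rpow_neg (by positivity), show π * (4 * t) = 4 * π * t by ring,
    inv_mul_cancel₀]
  positivity

theorem integrable_heatKernel (hV : finrank ℝ V = d) (ht : 0 < t) :
    Integrable (heatKernel d t : V → ℝ) :=
  .of_integral_ne_zero (by rw [integral_heatKernel hV ht]; exact one_ne_zero)

end HeatKernel

section HeatConvolution

variable {V : Type*} [NormedAddCommGroup V] [InnerProductSpace ℝ V] [FiniteDimensional ℝ V]
  [MeasurableSpace V] [BorelSpace V] {d : ℕ} {t : ℝ} {f : V → ℝ}

theorem integral_heatKernel_mul_le_of_ae_le (hV : finrank ℝ V = d) (ht : 0 < t)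
    (hf : ∀ y, 0 ≤ f y) {M : ℝ} (hM : ∀ᵐ y, f y ≤ M) (x : V) :
    ∫ y, heatKernel d t (x - y) * f y ≤ M := by
  have h := integral_mono_of_nonneg
    (.of_forall fun y ↦ mul_nonneg (heatKernel_nonneg ht.le (x - y)) (hf y))
    (((integrable_heatKernel hV ht).comp_sub_left x).mul_const M)
    (hM.mono fun y hy ↦ mul_le_mul_of_nonneg_left hy (heatKernel_nonneg ht.le (x - y)))
  rwa [integral_mul_const, integral_sub_left_eq_self (heatKernel d t), integral_heatKernel hV ht,
    one_mul] at h

theorem integral_heatKernel_mul_le_mul_integral (ht : 0 < t) (hf : ∀ y, 0 ≤ f y)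
    (hfi : Integrable f) (x : V) :
    ∫ y, heatKernel d t (x - y) * f y ≤ (4 * π * t) ^ (-(d : ℝ) / 2) * ∫ y, f y := by
  rw [← integral_const_mul]
  exact integral_mono_of_nonneg
    (.of_forall fun y ↦ mul_nonneg (heatKernel_nonneg ht.le (x - y)) (hf y)) (hfi.const_mul _)
    (.of_forall fun y ↦ mul_le_mul_of_nonneg_right (heatKernel_le ht.le (x - y)) (hf y))

theorem abs_integral_heatKernel_mul_le (ht : 0 < t) (a : V → ℝ) (x : V) :
    |∫ y, heatKernel d t (x - y) * a y| ≤ ∫ y, heatKernel d t (x - y) * |a y| := by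
  refine (abs_integral_le_integral_abs).trans_eq (integral_congr_ae (.of_forall fun y ↦ ?_))
  simp only [abs_mul, abs_of_nonneg (heatKernel_nonneg ht.le (x - y))]

theorem integral_heatKernel_mul_le_space (hV : finrank ℝ V = d) (ht : 0 < t)
    (hf : ∀ y, 0 ≤ f y) (hfi : Integrable f) {ε : ℝ} (hε : 0 ≤ ε) (hL1 : ∫ y, f y ≤ ε)
    (hdecay : ∀ᵐ y, f y ≤ ε * (1 + ‖y‖) ^ (-(d : ℝ))) (x : V) :
    ∫ y, heatKernel d t (x - y) * f y ≤
      2 ^ (d : ℝ) * (1 + heatTailConst d) * ε * (1 + ‖x‖) ^ (-(d : ℝ)) := by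
  have hC := heatTailConst_pos d
  rcases le_or_gt ‖x‖ 1 with hx | hx
  · have h_one := one_le_two_rpow_mul_one_add_rpow_neg d.cast_nonneg (norm_nonneg x) hx
    have hsup := ae_le_of_ae_le_mul_rpow_neg hε d.cast_nonneg
      (fun y ↦ le_add_of_nonneg_right (norm_nonneg y)) hdecay
    calc ∫ y, heatKernel d t (x - y) * f y ≤ ε :=
          integral_heatKernel_mul_le_of_ae_le hV ht hf hsup x
      _ ≤ 2 ^ (d : ℝ) * (1 + heatTailConst d) * ε * (1 + ‖x‖) ^ (-(d : ℝ)) := by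
          have : 0 ≤ 2 ^ (d : ℝ) * (1 + ‖x‖) ^ (-(d : ℝ)) * heatTailConst d * ε := by
            positivity
          nlinarith
  · have h_norm : ‖x‖ ^ (-(d : ℝ)) ≤ 2 ^ (d : ℝ) * (1 + ‖x‖) ^ (-(d : ℝ)) :=
      rpow_neg_le_two_rpow_mul_rpow_neg (by positivity) d.cast_nonneg (by linarith)
    have h_int := integral_mono_of_nonneg
      (.of_forall fun y ↦ mul_nonneg (heatKernel_nonneg ht.le (x - y)) (hf y))
      ((((integrable_heatKernel hV ht).comp_sub_left x).const_mul _).add (hfi.const_mul _))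
      (hdecay.mono fun y hy ↦ heatKernel_mul_le_add ht (by linarith) hε (hf y) hy)
    simp only [Pi.add_apply] at h_int
    rw [integral_add (((integrable_heatKernel hV ht).comp_sub_left x).const_mul _)
      (hfi.const_mul _), integral_const_mul, integral_const_mul,
      integral_sub_left_eq_self (heatKernel d t), integral_heatKernel hV ht] at h_int
    refine h_int.trans ?_
    have : 0 ≤ (1 + ‖x‖) ^ (-(d : ℝ)) := by positivity
    have : 0 ≤ ‖x‖ ^ (-(d : ℝ)) := by positivity
    nlinarith [mul_le_mul_of_nonneg_left hL1
        (by positivity : 0 ≤ heatTailConst d * ‖x‖ ^ (-(d : ℝ))),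
      mul_le_mul_of_nonneg_left h_norm (by positivity : 0 ≤ heatTailConst d * ε)]

theorem integral_heatKernel_mul_le_time (hV : finrank ℝ V = d) (ht : 0 < t)
    (hf : ∀ y, 0 ≤ f y) (hfi : Integrable f) {ε : ℝ} (hε : 0 ≤ ε) (hL1 : ∫ y, f y ≤ ε)
    (hsup : ∀ᵐ y, f y ≤ ε) (x : V) :
    ∫ y, heatKernel d t (x - y) * f y ≤ 2 ^ ((d : ℝ) / 2) * ε * (1 + t) ^ (-(d : ℝ) / 2) := by
  have hs : (0 : ℝ) ≤ d / 2 := by positivity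
  rcases le_or_gt t 1 with ht₁ | ht₁
  · have h_one := one_le_two_rpow_mul_one_add_rpow_neg hs ht.le ht₁
    rw [← neg_div] at h_one
    calc ∫ y, heatKernel d t (x - y) * f y ≤ ε :=
          integral_heatKernel_mul_le_of_ae_le hV ht hf hsup x
      _ ≤ 2 ^ ((d : ℝ) / 2) * ε * (1 + t) ^ (-(d : ℝ) / 2) := by nlinarith
  · have h_norm : (4 * π * t) ^ (-(d : ℝ) / 2) ≤ (1 + t) ^ (-(d : ℝ) / 2) :=
      rpow_le_rpow_of_nonpos (by positivity) (by nlinarith [pi_gt_three]) (by linarith)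
    have h_two : (1 : ℝ) ≤ 2 ^ ((d : ℝ) / 2) := one_le_rpow one_le_two hs
    have : 0 ≤ (1 + t) ^ (-(d : ℝ) / 2) := by positivity
    calc ∫ y, heatKernel d t (x - y) * f y ≤ (4 * π * t) ^ (-(d : ℝ) / 2) * ∫ y, f y :=
          integral_heatKernel_mul_le_mul_integral ht hf hfi x
      _ ≤ (1 + t) ^ (-(d : ℝ) / 2) * ε := by gcongr; exact integral_nonneg hf
      _ ≤ 2 ^ ((d : ℝ) / 2) * ε * (1 + t) ^ (-(d : ℝ) / 2) := by
          nlinarith [mul_le_mul_of_nonneg_right h_two (mul_nonneg hε this)]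

end HeatConvolution

theorem Measurable.integrable_of_lintegral_ofReal_abs_le {α : Type*} [MeasurableSpace α]
    {μ : Measure α} {a : α → ℝ} (ha : Measurable a) {ε : ℝ}
    (h : ∫⁻ y, ENNReal.ofReal |a y| ∂μ ≤ ENNReal.ofReal ε) : Integrable a μ :=
  ⟨ha.aestronglyMeasurable, (hasFiniteIntegral_iff_norm a).2 (h.trans_lt ENNReal.ofReal_lt_top)⟩

theorem Measurable.integral_abs_le_of_lintegral_ofReal_abs_le {α : Type*} [MeasurableSpace α]
    {μ : Measure α} {a : α → ℝ} (ha : Measurable a) {ε : ℝ} (hε : 0 ≤ ε)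
    (h : ∫⁻ y, ENNReal.ofReal |a y| ∂μ ≤ ENNReal.ofReal ε) : ∫ y, |a y| ∂μ ≤ ε := by
  rw [integral_eq_lintegral_of_nonneg_ae (.of_forall fun y ↦ abs_nonneg (a y))
    ha.abs.aestronglyMeasurable]
  exact ENNReal.toReal_le_of_le_ofReal hε h

theorem stmt7_general (d : ℕ) :
    ∃ C > (0 : ℝ), ∀ ε : ℝ, 0 < ε →
      ∀ a : EuclideanSpace ℝ (Fin d) → ℝ, Measurable a →
      (∫⁻ y, ENNReal.ofReal |a y|) ≤ ENNReal.ofReal ε →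
      (∀ᵐ y : EuclideanSpace ℝ (Fin d) ∂volume, |a y| ≤ ε * (1 + ‖y‖) ^ (-(d : ℝ))) →
      ∀ t : ℝ, 0 < t → ∀ x : EuclideanSpace ℝ (Fin d),
        |∫ y, (4 * Real.pi * t) ^ (-(d : ℝ) / 2) * Real.exp (-‖x - y‖ ^ 2 / (4 * t)) * a y| ≤
          C * ε * min ((1 + ‖x‖) ^ (-(d : ℝ))) ((1 + t) ^ (-(d : ℝ) / 2)) := by
  have hC := heatTailConst_pos d
  refine ⟨2 ^ (d : ℝ) * (1 + heatTailConst d) + 2 ^ ((d : ℝ) / 2), by positivity, ?_⟩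
  intro ε hε a ha hL1 hdecay t ht x
  have hV : finrank ℝ (EuclideanSpace ℝ (Fin d)) = d := finrank_euclideanSpace_fin
  have hai := ha.integrable_of_lintegral_ofReal_abs_le hL1
  have hL1' := ha.integral_abs_le_of_lintegral_ofReal_abs_le hε.le hL1
  have hsup := ae_le_of_ae_le_mul_rpow_neg hε.le d.cast_nonneg
    (fun y ↦ le_add_of_nonneg_right (norm_nonneg y)) hdecay
  have hf : ∀ y, 0 ≤ |a y| := fun y ↦ abs_nonneg (a y)
  calc |∫ y, heatKernel d t (x - y) * a y|
      ≤ ∫ y, heatKernel d t (x - y) * |a y| := abs_integral_heatKernel_mul_le ht a x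
    _ ≤ min (2 ^ (d : ℝ) * (1 + heatTailConst d) * ε * (1 + ‖x‖) ^ (-(d : ℝ)))
          (2 ^ ((d : ℝ) / 2) * ε * (1 + t) ^ (-(d : ℝ) / 2)) :=
        le_min (integral_heatKernel_mul_le_space hV ht hf hai.abs hε.le hL1' hdecay x)
          (integral_heatKernel_mul_le_time hV ht hf hai.abs hε.le hL1' hsup x)
    _ ≤ _ := by
        rw [mul_min_of_nonneg _ _ (by positivity)]
        gcongr <;> nlinarith [rpow_pos_of_pos two_pos ((d : ℝ) / 2),
          rpow_pos_of_pos two_pos (d : ℝ)]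

/-- There is `C > 0` depending only on `d` such that for every `ε > 0`
and every measurable `a` with `∫|a| ≤ ε` and `|a(y)| ≤ ε (1+‖y‖)^{−d}` a.e., the
heat extension `g_t ⋆ a` (with `g_t(x) = (4πt)^{−d/2} exp(−‖x‖²/(4t))`) satisfies
`|(g_t ⋆ a)(x)| ≤ C ε min((1+‖x‖)^{−d}, (1+t)^{−d/2})` for all `t > 0`, `x`. -/
theorem stmt7 (d : ℕ) (hd : 1 ≤ d) :
    ∃ C > (0 : ℝ), ∀ ε : ℝ, 0 < ε →
      ∀ a : EuclideanSpace ℝ (Fin d) → ℝ, Measurable a →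
      (∫⁻ y, ENNReal.ofReal |a y|) ≤ ENNReal.ofReal ε →
      (∀ᵐ y : EuclideanSpace ℝ (Fin d) ∂volume, |a y| ≤ ε * (1 + ‖y‖) ^ (-(d : ℝ))) →
      ∀ t : ℝ, 0 < t → ∀ x : EuclideanSpace ℝ (Fin d),
        |∫ y, (4 * Real.pi * t) ^ (-(d : ℝ) / 2) * Real.exp (-‖x - y‖ ^ 2 / (4 * t)) * a y| ≤
          C * ε * min ((1 + ‖x‖) ^ (-(d : ℝ))) ((1 + t) ^ (-(d : ℝ) / 2)) :=
  stmt7_general d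
end

section
/- Let d ≥ 3 be an integer, C₀ > 0 and ε > 0. Let F : ℝ^d × (0,∞) → ℝ be measurable with |F(z,τ)| ≤ C₀·min(‖z‖^{−d−1}, τ^{−(d+1)/2}) for all z ≠ 0 and τ > 0, and let u : ℝ^d × [0,∞) → ℝ^d be measurable with |u(y,s)| ≤ ε·min((1+‖y‖)^{−d}, (1+s)^{−d/2}) for a.e. y and all s ≥ 0. Then there exists a constant C > 0 (depending only on d and C₀) such that for all t > 0 and all x ∈ ℝ^d with ‖x‖ ≥ 1, |∫₀^t ∫_{ℝ^d} F(x−y, t−s)·|u(y,s)|² dy ds| ≤ C·ε²·√t·‖x‖^{−d−1}. -/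
/-!
Fix `s ∈ (0, t)`. Interpolating the two decay bounds on `u` gives
`|u(y,s)|² ≤ ε² (1+s)⁻¹ (1+‖y‖)^{-(d+1)}`; this is where `d ≥ 3` enters.
Splitting according to whether `y` is closer to `x` or to `0`, the product
`min(‖x-y‖^{-d-1}, (t-s)^{-(d+1)/2}) (1+‖y‖)^{-(d+1)}` is at most `‖x‖^{-d-1}` times
`(1+‖y‖)^{-(d+1)} + (‖x-y‖ + √(t-s))^{-(d+1)}`, and by scaling the second term
integrates to `(t-s)^{-1/2} ∫ (1+‖z‖)^{-(d+1)} dz`. With `(1+s)⁻¹ ≤ s^{-1/2}` the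
time integral is then bounded by `∫₀ᵗ (s^{-1/2} + (t-s)^{-1/2}) ds = 4√t`.
-/

open MeasureTheory Module Set

lemma rpow_neg_le_two_rpow_mul {a X N : ℝ} (hX : 0 < X) (hN : 0 ≤ N) (h : X / 2 ≤ a) :
    a ^ (-N) ≤ 2 ^ N * X ^ (-N) :=
  calc a ^ (-N) ≤ (X / 2) ^ (-N) :=
        Real.rpow_le_rpow_of_nonpos (by positivity) h (by linarith)
    _ = 2 ^ N * X ^ (-N) := by
      rw [Real.div_rpow hX.le zero_le_two, Real.rpow_neg zero_le_two, div_inv_eq_mul, mul_comm]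

lemma min_rpow_neg_le {a b N : ℝ} (ha : 0 ≤ a) (hb : 0 < b) (hN : 0 ≤ N) :
    min (a ^ (-N)) (b ^ (-N)) ≤ 2 ^ N * (a + b) ^ (-N) := by
  rcases le_total a b with hab | hab
  · exact (min_le_right _ _).trans (rpow_neg_le_two_rpow_mul (by positivity) hN (by linarith))
  · exact (min_le_left _ _).trans (rpow_neg_le_two_rpow_mul (by positivity) hN (by linarith))

lemma min_rpow_neg_mul_one_add_rpow_neg_le {E : Type*} [SeminormedAddCommGroup E] {x y : E}
    {c N : ℝ} (hx : 0 < ‖x‖) (hc : 0 < c) (hN : 0 ≤ N) :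
    min (‖x - y‖ ^ (-N)) (c ^ (-N)) * (1 + ‖y‖) ^ (-N) ≤
      2 ^ N * ‖x‖ ^ (-N) * ((1 + ‖y‖) ^ (-N) + 2 ^ N * (‖x - y‖ + c) ^ (-N)) := by
  have hy : 0 ≤ (1 + ‖y‖) ^ (-N) := by positivity
  have hxy : 0 ≤ 2 ^ N * (‖x - y‖ + c) ^ (-N) := by positivity
  have hX : 0 ≤ 2 ^ N * ‖x‖ ^ (-N) := by positivity
  rcases le_total (‖x‖ / 2) ‖x - y‖ with h | h
  · have h1 : min (‖x - y‖ ^ (-N)) (c ^ (-N)) ≤ 2 ^ N * ‖x‖ ^ (-N) :=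
      (min_le_left _ _).trans (rpow_neg_le_two_rpow_mul hx hN h)
    nlinarith [mul_le_mul_of_nonneg_right h1 hy]
  · have h1 : (1 + ‖y‖) ^ (-N) ≤ 2 ^ N * ‖x‖ ^ (-N) :=
      rpow_neg_le_two_rpow_mul hx hN (by linarith [norm_sub_norm_le x y])
    nlinarith [mul_le_mul (min_rpow_neg_le (norm_nonneg (x - y)) hc hN) h1 hy hxy]

-- `min(α, β)² ≤ α^{(d+1)/d} β^{(d-1)/d}`
lemma sq_le_of_le_mul_min_rpow_neg {d a b v ε : ℝ} (hd : 3 ≤ d) (ha : 1 ≤ a) (hb : 1 ≤ b)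
    (hv : 0 ≤ v) (h : v ≤ ε * min (a ^ (-d)) (b ^ (-d / 2))) :
    v ^ 2 ≤ ε ^ 2 * b⁻¹ * a ^ (-(d + 1)) := by
  set m := min (a ^ (-d)) (b ^ (-d / 2))
  have hm : 0 < m := by positivity
  have hp : 0 ≤ (d + 1) / d := by positivity
  have hq : 0 ≤ (d - 1) / d := div_nonneg (by linarith) (by linarith)
  have hsplit : m ^ 2 = m ^ ((d + 1) / d) * m ^ ((d - 1) / d) := by
    rw [← Real.rpow_add hm, ← Real.rpow_natCast]
    congr 1
    field_simp
    ring
  have ha' : m ^ ((d + 1) / d) ≤ a ^ (-(d + 1)) :=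
    calc m ^ ((d + 1) / d) ≤ (a ^ (-d)) ^ ((d + 1) / d) :=
          Real.rpow_le_rpow hm.le (min_le_left _ _) hp
      _ = a ^ (-(d + 1)) := by
          rw [← Real.rpow_mul (by linarith)]
          congr 1
          field_simp
  have hb' : m ^ ((d - 1) / d) ≤ b⁻¹ :=
    calc m ^ ((d - 1) / d) ≤ (b ^ (-d / 2)) ^ ((d - 1) / d) :=
          Real.rpow_le_rpow hm.le (min_le_right _ _) hq
      _ = b ^ (-((d - 1) / 2)) := by
          rw [← Real.rpow_mul (by linarith)]
          congr 1
          field_simp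
      _ ≤ b ^ (-1 : ℝ) := Real.rpow_le_rpow_of_exponent_le hb (by linarith)
      _ = b⁻¹ := Real.rpow_neg_one b
  calc v ^ 2 ≤ (ε * m) ^ 2 := pow_le_pow_left₀ hv h 2
    _ = ε ^ 2 * (m ^ ((d + 1) / d) * m ^ ((d - 1) / d)) := by rw [mul_pow, hsplit]
    _ ≤ ε ^ 2 * (a ^ (-(d + 1)) * b⁻¹) := by gcongr
    _ = ε ^ 2 * b⁻¹ * a ^ (-(d + 1)) := by ring

lemma inv_one_add_le_rpow_neg_half {s : ℝ} (hs : 0 < s) :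
    (1 + s)⁻¹ ≤ s ^ (-(1 / 2) : ℝ) := by
  rw [Real.rpow_neg hs.le, ← Real.sqrt_eq_rpow]
  have := Real.sq_sqrt hs.le
  exact inv_anti₀ (Real.sqrt_pos.2 hs) (by nlinarith [sq_nonneg (√s - 1)])

lemma inv_one_add_mul_one_add_le {s a : ℝ} (hs : 0 < s) (ha : 0 ≤ a) :
    (1 + s)⁻¹ * (1 + a) ≤ s ^ (-(1 / 2) : ℝ) + a := by
  have h1 := inv_one_add_le_rpow_neg_half hs
  have h2 : (1 + s)⁻¹ ≤ 1 := inv_le_one_of_one_le₀ (by linarith)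
  nlinarith

lemma intervalIntegrable_sub_rpow {r : ℝ} (hr : -1 < r) (t : ℝ) :
    IntervalIntegrable (fun s ↦ (t - s) ^ r) volume 0 t := by
  simpa using (intervalIntegral.intervalIntegrable_rpow' hr (a := t) (b := 0)).comp_sub_left t

lemma integral_sub_rpow (r t : ℝ) : ∫ s in 0..t, (t - s) ^ r = ∫ s in 0..t, s ^ r := by
  simpa using intervalIntegral.integral_comp_sub_left (fun s ↦ s ^ r) t (a := 0) (b := t)

lemma integral_rpow_neg_half (t : ℝ) : ∫ s in 0..t, s ^ (-(1 / 2) : ℝ) = 2 * √t := by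
  rw [integral_rpow (.inl (by norm_num)), Real.sqrt_eq_rpow]
  norm_num
  ring

lemma integrableOn_Ioo_rpow_neg_half_add {t : ℝ} (ht : 0 ≤ t) (a : ℝ) :
    IntegrableOn (fun s ↦ s ^ (-(1 / 2) : ℝ) + a * (t - s) ^ (-(1 / 2) : ℝ)) (Ioo 0 t) :=
  ((intervalIntegrable_iff_integrableOn_Ioc_of_le ht).1
    ((intervalIntegral.intervalIntegrable_rpow' (by norm_num)).add
      ((intervalIntegrable_sub_rpow (by norm_num) t).const_mul a))).mono_set
    Ioo_subset_Ioc_self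

lemma integral_Ioo_rpow_neg_half_add {t : ℝ} (ht : 0 ≤ t) (a : ℝ) :
    ∫ s in Ioo 0 t, (s ^ (-(1 / 2) : ℝ) + a * (t - s) ^ (-(1 / 2) : ℝ)) =
      (1 + a) * (2 * √t) := by
  rw [← integral_Ioc_eq_integral_Ioo, ← intervalIntegral.integral_of_le ht,
    intervalIntegral.integral_add (intervalIntegral.intervalIntegrable_rpow' (by norm_num))
      ((intervalIntegrable_sub_rpow (by norm_num) t).const_mul a),
    intervalIntegral.integral_const_mul, integral_sub_rpow, integral_rpow_neg_half]
  ring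

lemma norm_add_rpow_neg_eq {E : Type*} [SeminormedAddCommGroup E] [NormedSpace ℝ E] {c : ℝ}
    (N : ℝ) (hc : 0 < c) (z : E) :
    (‖z‖ + c) ^ (-N) = c ^ (-N) * (1 + ‖c⁻¹ • z‖) ^ (-N) := by
  rw [← Real.mul_rpow hc.le (by positivity), norm_smul, Real.norm_of_nonneg (by positivity),
    mul_add, mul_one, mul_inv_cancel_left₀ hc.ne', add_comm]

section HaarMeasure

variable {E : Type*} [NormedAddCommGroup E] [NormedSpace ℝ E] [FiniteDimensional ℝ E]
  [MeasurableSpace E] [BorelSpace E] (μ : Measure E) [μ.IsAddHaarMeasure] {c N : ℝ}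

lemma integrable_norm_add_rpow_neg (hN : (finrank ℝ E : ℝ) < N) (hc : 0 < c) :
    Integrable (fun z : E ↦ (‖z‖ + c) ^ (-N)) μ :=
  (((integrable_one_add_norm hN).comp_smul (inv_ne_zero hc.ne')).const_mul (c ^ (-N))).congr
    (.of_forall fun z ↦ (norm_add_rpow_neg_eq N hc z).symm)

lemma integral_norm_add_rpow_neg (hc : 0 < c) :
    ∫ z, (‖z‖ + c) ^ (-N) ∂μ =
      c ^ ((finrank ℝ E : ℝ) - N) * ∫ z, (1 + ‖z‖) ^ (-N) ∂μ := by
  simp_rw [norm_add_rpow_neg_eq N hc]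
  rw [integral_const_mul, Measure.integral_comp_inv_smul μ (fun z ↦ (1 + ‖z‖) ^ (-N)) c,
    smul_eq_mul, abs_of_pos (by positivity), ← mul_assoc, ← Real.rpow_natCast,
    ← Real.rpow_add hc, sub_eq_neg_add]

lemma integral_one_add_norm_rpow_neg_pos (hN : (finrank ℝ E : ℝ) < N) :
    0 < ∫ z, (1 + ‖z‖) ^ (-N) ∂μ :=
  integral_pos_of_integrable_nonneg_nonzero (x := 0)
    ((continuous_const.add continuous_norm).rpow_const
      fun z ↦ .inl (by positivity : (0 : ℝ) < 1 + ‖z‖).ne')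
    (integrable_one_add_norm hN)
    (fun z ↦ by positivity) (by simp)

theorem abs_integral_mul_le_of_min_rpow_neg (hN : (finrank ℝ E : ℝ) < N) {G w : E → ℝ}
    {x : E} {C₀ M : ℝ} (hx : x ≠ 0) (hc : 0 < c) (hC₀ : 0 ≤ C₀) (hM : 0 ≤ M)
    (hG : ∀ z, z ≠ 0 → |G z| ≤ C₀ * min (‖z‖ ^ (-N)) (c ^ (-N)))
    (hw : ∀ᵐ y ∂μ, |w y| ≤ M * (1 + ‖y‖) ^ (-N)) :
    |∫ y, G (x - y) * w y ∂μ| ≤ C₀ * M * 2 ^ N * ‖x‖ ^ (-N) *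
      (1 + 2 ^ N * c ^ ((finrank ℝ E : ℝ) - N)) * ∫ y, (1 + ‖y‖) ^ (-N) ∂μ := by
  have : Nontrivial E := nontrivial_of_ne x 0 hx
  have hx' : 0 < ‖x‖ := norm_pos_iff.2 hx
  have hN0 : 0 ≤ N := (Nat.cast_nonneg _).trans hN.le
  have hint : Integrable (fun y ↦ (1 + ‖y‖) ^ (-N) + 2 ^ N * (‖x - y‖ + c) ^ (-N)) μ :=
    (integrable_one_add_norm hN).add
      (((integrable_norm_add_rpow_neg μ hN hc).comp_sub_left x).const_mul _)
  have hbound : ∀ᵐ y ∂μ, ‖G (x - y) * w y‖ ≤ C₀ * M * (2 ^ N * ‖x‖ ^ (-N) *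
      ((1 + ‖y‖) ^ (-N) + 2 ^ N * (‖x - y‖ + c) ^ (-N))) := by
    filter_upwards [hw, compl_mem_ae_iff.2 (measure_singleton x)] with y hwy hyx
    have hGy := hG (x - y) (sub_ne_zero.2 (Ne.symm hyx))
    calc ‖G (x - y) * w y‖ = |G (x - y)| * |w y| := by rw [Real.norm_eq_abs, abs_mul]
      _ ≤ C₀ * min (‖x - y‖ ^ (-N)) (c ^ (-N)) * (M * (1 + ‖y‖) ^ (-N)) :=
        mul_le_mul hGy hwy (abs_nonneg _) ((abs_nonneg _).trans hGy)
      _ = C₀ * M * (min (‖x - y‖ ^ (-N)) (c ^ (-N)) * (1 + ‖y‖) ^ (-N)) := by ring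
      _ ≤ _ := mul_le_mul_of_nonneg_left
        (min_rpow_neg_mul_one_add_rpow_neg_le hx' hc hN0) (by positivity)
  calc |∫ y, G (x - y) * w y ∂μ|
      ≤ ∫ y, C₀ * M * (2 ^ N * ‖x‖ ^ (-N) *
          ((1 + ‖y‖) ^ (-N) + 2 ^ N * (‖x - y‖ + c) ^ (-N))) ∂μ :=
        norm_integral_le_of_norm_le ((hint.const_mul _).const_mul _) hbound
    _ = _ := by
      rw [integral_const_mul, integral_const_mul, integral_add (integrable_one_add_norm hN)
        (((integrable_norm_add_rpow_neg μ hN hc).comp_sub_left x).const_mul _),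
        integral_const_mul, integral_sub_left_eq_self (fun z ↦ (‖z‖ + c) ^ (-N)) μ x,
        integral_norm_add_rpow_neg μ hc]
      ring

lemma abs_integral_mul_norm_sq_le {F : Type*} [NormedAddCommGroup F] {d : ℕ}
    (hE : finrank ℝ E = d) (hd : 3 ≤ d) {G : E → ℝ} {v : E → F} {x : E}
    {C₀ ε s τ : ℝ}
    (hx : x ≠ 0) (hC₀ : 0 ≤ C₀) (hs : 0 < s) (hτ : 0 < τ)
    (hG : ∀ z, z ≠ 0 →
      |G z| ≤ C₀ * min (‖z‖ ^ (-(d : ℝ) - 1)) (τ ^ (-((d : ℝ) + 1) / 2)))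
    (hv : ∀ᵐ y ∂μ,
      ‖v y‖ ≤ ε * min ((1 + ‖y‖) ^ (-(d : ℝ))) ((1 + s) ^ (-(d : ℝ) / 2))) :
    |∫ y, G (x - y) * ‖v y‖ ^ 2 ∂μ| ≤
      C₀ * ε ^ 2 * 2 ^ ((d : ℝ) + 1) * ‖x‖ ^ (-(d : ℝ) - 1) *
      (∫ y, (1 + ‖y‖) ^ (-((d : ℝ) + 1)) ∂μ) *
        (s ^ (-(1 / 2) : ℝ) + 2 ^ ((d : ℝ) + 1) * τ ^ (-(1 / 2) : ℝ)) := by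
  have hdN : (finrank ℝ E : ℝ) < d + 1 := by simp [hE]
  have hG' : ∀ z, z ≠ 0 →
      |G z| ≤ C₀ * min (‖z‖ ^ (-((d : ℝ) + 1))) (√τ ^ (-((d : ℝ) + 1))) := by
    intro z hz
    have := hG z hz
    rwa [← neg_add', Real.rpow_div_two_eq_sqrt _ hτ.le] at this
  have hw : ∀ᵐ y ∂μ,
      |‖v y‖ ^ 2| ≤ ε ^ 2 * (1 + s)⁻¹ * (1 + ‖y‖) ^ (-((d : ℝ) + 1)) := by
    filter_upwards [hv] with y hy
    rw [abs_of_nonneg (by positivity)]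
    exact sq_le_of_le_mul_min_rpow_neg (by exact_mod_cast hd) (by simp) (by linarith)
      (norm_nonneg _) hy
  have hexp : √τ ^ ((finrank ℝ E : ℝ) - (d + 1)) = τ ^ (-(1 / 2) : ℝ) := by
    rw [← Real.rpow_div_two_eq_sqrt _ hτ.le, hE]
    norm_num
  have hpos : 0 ≤ C₀ * ε ^ 2 * 2 ^ ((d : ℝ) + 1) * ‖x‖ ^ (-(d : ℝ) - 1) *
      ∫ y, (1 + ‖y‖) ^ (-((d : ℝ) + 1)) ∂μ :=
    mul_nonneg (by positivity) (integral_nonneg fun y ↦ by positivity)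
  calc |∫ y, G (x - y) * ‖v y‖ ^ 2 ∂μ|
      ≤ C₀ * (ε ^ 2 * (1 + s)⁻¹) * 2 ^ ((d : ℝ) + 1) * ‖x‖ ^ (-((d : ℝ) + 1)) *
          (1 + 2 ^ ((d : ℝ) + 1) * τ ^ (-(1 / 2) : ℝ)) *
            ∫ y, (1 + ‖y‖) ^ (-((d : ℝ) + 1)) ∂μ := by
        rw [← hexp]
        exact abs_integral_mul_le_of_min_rpow_neg μ hdN hx (Real.sqrt_pos.2 hτ) hC₀
          (by positivity) hG' hw
    _ = C₀ * ε ^ 2 * 2 ^ ((d : ℝ) + 1) * ‖x‖ ^ (-(d : ℝ) - 1) *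
          (∫ y, (1 + ‖y‖) ^ (-((d : ℝ) + 1)) ∂μ) *
            ((1 + s)⁻¹ * (1 + 2 ^ ((d : ℝ) + 1) * τ ^ (-(1 / 2) : ℝ))) := by
        rw [neg_add']
        ring
    _ ≤ _ := mul_le_mul_of_nonneg_left
        (inv_one_add_mul_one_add_le hs (by positivity)) hpos

end HaarMeasure

/-- For `d ≥ 3`, if `|F(z,τ)| ≤ C₀ min(‖z‖^{−d−1}, τ^{−(d+1)/2})` and
`|u(y,s)| ≤ ε min((1+‖y‖)^{−d}, (1+s)^{−d/2})` a.e., then there is `C > 0`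
depending only on `d` and `C₀` such that for all `t > 0` and `‖x‖ ≥ 1`,
`|∫₀^t ∫ F(x−y,t−s) |u(y,s)|² dy ds| ≤ C ε² √t ‖x‖^{−d−1}`. -/
theorem stmt13 (d : ℕ) (hd : 3 ≤ d) (C₀ : ℝ) (hC₀ : 0 < C₀) :
    ∃ C > (0 : ℝ), ∀ ε : ℝ, 0 < ε →
      ∀ F : EuclideanSpace ℝ (Fin d) → ℝ → ℝ, Measurable (Function.uncurry F) →
      (∀ z : EuclideanSpace ℝ (Fin d), z ≠ 0 → ∀ τ : ℝ, 0 < τ →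
        |F z τ| ≤ C₀ * min (‖z‖ ^ (-(d : ℝ) - 1)) (τ ^ (-((d : ℝ) + 1) / 2))) →
      ∀ u : EuclideanSpace ℝ (Fin d) → ℝ → EuclideanSpace ℝ (Fin d),
      Measurable (Function.uncurry u) →
      (∀ s : ℝ, 0 ≤ s → ∀ᵐ y : EuclideanSpace ℝ (Fin d) ∂volume,
        ‖u y s‖ ≤ ε * min ((1 + ‖y‖) ^ (-(d : ℝ))) ((1 + s) ^ (-(d : ℝ) / 2))) →
      ∀ t : ℝ, 0 < t → ∀ x : EuclideanSpace ℝ (Fin d), 1 ≤ ‖x‖ →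
        |∫ s in Set.Ioc (0 : ℝ) t, ∫ y, F (x - y) (t - s) * ‖u y s‖ ^ 2| ≤
          C * ε ^ 2 * Real.sqrt t * ‖x‖ ^ (-(d : ℝ) - 1) := by
  have hE := finrank_euclideanSpace_fin (𝕜 := ℝ) (n := d)
  set A := ∫ y : EuclideanSpace ℝ (Fin d), (1 + ‖y‖) ^ (-((d : ℝ) + 1))
  have hA : 0 < A := integral_one_add_norm_rpow_neg_pos volume (by simp)
  refine ⟨C₀ * 2 ^ ((d : ℝ) + 1) * A * (1 + 2 ^ ((d : ℝ) + 1)) * 2, by positivity, ?_⟩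
  intro ε _ F _ hF u _ hu t ht x hx
  have hx0 : x ≠ 0 := norm_pos_iff.1 (by linarith)
  calc |∫ s in Ioc 0 t, ∫ y, F (x - y) (t - s) * ‖u y s‖ ^ 2|
      = ‖∫ s in Ioo 0 t, ∫ y, F (x - y) (t - s) * ‖u y s‖ ^ 2‖ := by
        rw [integral_Ioc_eq_integral_Ioo, Real.norm_eq_abs]
    _ ≤ ∫ s in Ioo 0 t, C₀ * ε ^ 2 * 2 ^ ((d : ℝ) + 1) * ‖x‖ ^ (-(d : ℝ) - 1) * A *
          (s ^ (-(1 / 2) : ℝ) + 2 ^ ((d : ℝ) + 1) * (t - s) ^ (-(1 / 2) : ℝ)) :=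
        norm_integral_le_of_norm_le ((integrableOn_Ioo_rpow_neg_half_add ht.le _).const_mul _)
          (ae_restrict_of_forall_mem measurableSet_Ioo fun s ⟨hs, hst⟩ ↦
            abs_integral_mul_norm_sq_le volume hE hd hx0 hC₀.le hs (sub_pos.2 hst)
              (fun z hz ↦ hF z hz _ (sub_pos.2 hst)) (hu s hs.le))
    _ = C₀ * 2 ^ ((d : ℝ) + 1) * A * (1 + 2 ^ ((d : ℝ) + 1)) * 2 * ε ^ 2 * √t *
          ‖x‖ ^ (-(d : ℝ) - 1) := by
        rw [integral_const_mul, integral_Ioo_rpow_neg_half_add ht.le]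
        ring
end

section
/- Let d ≥ 2 be an integer and let b : [0,∞) → ℝ^d be continuous with b(0) ≠ 0. For t > 0 and x ≠ 0 define m_t(x) = 𝕂(x)·∫₀^t b(s) ds (matrix-vector product). Then there exist t₀ > 0 and constants 0 < α ≤ β such that for all t ∈ (0, t₀) and all x ∈ ℝ^d with x ≠ 0, α·t·‖x‖^{−d} ≤ |m_t(x)| ≤ β·t·‖x‖^{−d}. -/
lemma key_bounds (d : ℕ) (hd : 2 ≤ d) (c : ℝ) (hc : 0 ≤ c)
    (x v : EuclideanSpace ℝ (Fin d)) (hx : x ≠ 0) :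
    c * ‖v‖ * ‖x‖ ^ (-(d : ℝ)) ≤
      Real.sqrt (∑ j : Fin d,
        (∑ k : Fin d, c * (-(if j = k then (1:ℝ) else 0) * ‖x‖ ^ 2 + d * x j * x k)
          / ‖x‖ ^ (d + 2) * v k) ^ 2) ∧
    Real.sqrt (∑ j : Fin d,
        (∑ k : Fin d, c * (-(if j = k then (1:ℝ) else 0) * ‖x‖ ^ 2 + d * x j * x k)
          / ‖x‖ ^ (d + 2) * v k) ^ 2) ≤
      c * ((d : ℝ) - 1) * ‖v‖ * ‖x‖ ^ (-(d : ℝ)) := by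
  have hxn : (0:ℝ) < ‖x‖ := norm_pos_iff.mpr hx
  set X : ℝ := ‖x‖ ^ 2 with hX
  set N : ℝ := ‖x‖ ^ (d + 2) with hN
  set P : ℝ := ∑ k : Fin d, x k * v k with hP
  set V : ℝ := ∑ k : Fin d, (v k) ^ 2 with hV
  have hXsum : X = ∑ k : Fin d, (x k) ^ 2 := by
    rw [hX, EuclideanSpace.norm_eq, Real.sq_sqrt (by positivity)]
    simp [sq_abs]
  have hVnorm : ‖v‖ = Real.sqrt V := by
    rw [EuclideanSpace.norm_eq]; congr 1; simp [hV, sq_abs]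
  have hinner : ∀ j : Fin d,
      (∑ k : Fin d, c * (-(if j = k then (1:ℝ) else 0) * ‖x‖ ^ 2 + d * x j * x k)
        / N * v k) = (c / N) * (d * x j * P - X * v j) := by
    intro j
    have hterm : ∀ k : Fin d, c * (-(if j = k then (1:ℝ) else 0) * ‖x‖ ^ 2 + d * x j * x k)
        / N * v k
        = (c / N) * (d * x j) * (x k * v k) + (if k = j then -((c / N) * X * v k) else 0) := by
      intro k
      by_cases h : j = k
      · subst h; simp only [eq_self_iff_true, if_true]; rw [hX]; ring
      · rw [if_neg h, if_neg (Ne.symm h)]; ring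
    rw [Finset.sum_congr rfl (fun k _ => hterm k), Finset.sum_add_distrib,
      Finset.sum_ite_eq' Finset.univ j (fun k => -((c / N) * X * v k)),
      if_pos (Finset.mem_univ j), ← Finset.mul_sum, ← hP]
    ring
  have hsum : (∑ j : Fin d,
      (∑ k : Fin d, c * (-(if j = k then (1:ℝ) else 0) * ‖x‖ ^ 2 + d * x j * x k)
        / N * v k) ^ 2) = (c / N) ^ 2 * (((d:ℝ)^2 - 2*d) * P ^ 2 * X + X ^ 2 * V) := by
    rw [Finset.sum_congr rfl (fun j _ => by rw [hinner j])]
    have expand : ∀ j : Fin d, ((c / N) * (d * x j * P - X * v j)) ^ 2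
        = (c/N)^2 * (((d:ℝ)^2 * P^2) * (x j)^2 - (2*d*P*X) * (x j * v j) + X^2 * (v j)^2) := by
      intro j; ring
    rw [Finset.sum_congr rfl (fun j _ => expand j)]
    simp only [Finset.sum_sub_distrib, Finset.sum_add_distrib, ← Finset.mul_sum, ← hXsum,
      ← hP, ← hV]
    ring
  have hcs : P ^ 2 ≤ X * V := by
    rw [hXsum]; exact Finset.sum_mul_sq_le_sq_mul_sq Finset.univ _ _
  have hXpos : 0 < X := by positivity
  have hVnn : 0 ≤ V := Finset.sum_nonneg fun k _ => sq_nonneg _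
  have hNpos : 0 < N := by positivity
  have hcN : 0 ≤ c / N := div_nonneg hc hNpos.le
  have hdcast : (2:ℝ) ≤ (d:ℝ) := by exact_mod_cast hd
  have hd2 : (0:ℝ) ≤ (d:ℝ)^2 - 2*d := by nlinarith
  have hlow : X ^ 2 * V ≤ ((d:ℝ)^2 - 2*d) * P ^ 2 * X + X ^ 2 * V := by
    nlinarith [mul_nonneg (mul_nonneg hd2 (sq_nonneg P)) hXpos.le]
  have hhigh : ((d:ℝ)^2 - 2*d) * P ^ 2 * X + X ^ 2 * V ≤ (((d:ℝ)-1) * X) ^ 2 * V := by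
    nlinarith [mul_nonneg (mul_nonneg hd2 hXpos.le) (sub_nonneg.mpr hcs)]
  have hRr : ‖x‖ ^ (-(d : ℝ)) = X / N := by
    rw [Real.rpow_neg (norm_nonneg x), Real.rpow_natCast, hX, hN, pow_add]
    field_simp
  rw [hsum]
  constructor
  · have h1 : c * ‖v‖ * ‖x‖ ^ (-(d : ℝ)) = Real.sqrt ((c/N)^2 * (X^2 * V)) := by
      rw [Real.sqrt_mul (sq_nonneg _), Real.sqrt_mul (sq_nonneg _),
        Real.sqrt_sq hcN, Real.sqrt_sq hXpos.le, hVnorm, hRr]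
      ring
    rw [h1]
    apply Real.sqrt_le_sqrt
    exact mul_le_mul_of_nonneg_left hlow (sq_nonneg _)
  · have h2 : c * ((d:ℝ) - 1) * ‖v‖ * ‖x‖ ^ (-(d : ℝ))
        = Real.sqrt ((c/N)^2 * ((((d:ℝ)-1) * X) ^ 2 * V)) := by
      rw [Real.sqrt_mul (sq_nonneg _), Real.sqrt_mul (sq_nonneg _),
        Real.sqrt_sq hcN, Real.sqrt_sq (by nlinarith : (0:ℝ) ≤ ((d:ℝ)-1) * X),
        hVnorm, hRr]
      ring
    rw [h2]
    apply Real.sqrt_le_sqrt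
    exact mul_le_mul_of_nonneg_left hhigh (sq_nonneg _)

/-- Let `d ≥ 2`, let `b : [0,∞) → ℝ^d` be continuous with `b(0) ≠ 0`,
and for `t > 0`, `x ≠ 0` let `m_t(x) = 𝕂(x)·∫₀^t b(s) ds`, where
`𝕂_{j,k}(x) = (Γ(d/2)/(2π^{d/2}))·(−δ_{j,k}‖x‖² + d x_j x_k)/‖x‖^{d+2}`.
Then there are `t₀ > 0` and `0 < α ≤ β` with
`α t ‖x‖^{−d} ≤ |m_t(x)| ≤ β t ‖x‖^{−d}` for all `t ∈ (0,t₀)` and `x ≠ 0`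
(the Euclidean norm of `m_t(x)` written as the square root of the sum of the
squares of its components). -/
theorem stmt17 (d : ℕ) (hd : 2 ≤ d)
    (b : ℝ → EuclideanSpace ℝ (Fin d))
    (hb : ContinuousOn b (Set.Ici (0 : ℝ))) (hb0 : b 0 ≠ 0) :
    ∃ t₀ > (0 : ℝ), ∃ α > (0 : ℝ), ∃ β : ℝ, α ≤ β ∧
      ∀ t ∈ Set.Ioo (0 : ℝ) t₀, ∀ x : EuclideanSpace ℝ (Fin d), x ≠ 0 →
        α * t * ‖x‖ ^ (-(d : ℝ)) ≤
          Real.sqrt (∑ j : Fin d,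
            (∑ k : Fin d,
              Real.Gamma ((d : ℝ) / 2) / (2 * Real.pi ^ ((d : ℝ) / 2)) *
                (-(if j = k then (1 : ℝ) else 0) * ‖x‖ ^ 2 + d * x j * x k) / ‖x‖ ^ (d + 2) *
                (∫ s in (0 : ℝ)..t, b s) k) ^ 2) ∧
        Real.sqrt (∑ j : Fin d,
            (∑ k : Fin d,
              Real.Gamma ((d : ℝ) / 2) / (2 * Real.pi ^ ((d : ℝ) / 2)) *
                (-(if j = k then (1 : ℝ) else 0) * ‖x‖ ^ 2 + d * x j * x k) / ‖x‖ ^ (d + 2) *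
                (∫ s in (0 : ℝ)..t, b s) k) ^ 2) ≤
          β * t * ‖x‖ ^ (-(d : ℝ)) := by
  set c : ℝ := Real.Gamma ((d : ℝ) / 2) / (2 * Real.pi ^ ((d : ℝ) / 2)) with hc
  have hcpos : 0 < c := by
    apply div_pos (Real.Gamma_pos_of_pos (by positivity))
    positivity
  set B : ℝ := ‖b 0‖ with hB
  have hBpos : 0 < B := norm_pos_iff.mpr hb0
  -- continuity at 0 within Ici 0
  have hcw : ContinuousWithinAt b (Set.Ici (0:ℝ)) 0 := hb 0 Set.self_mem_Ici
  rw [Metric.continuousWithinAt_iff] at hcw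
  obtain ⟨δ, hδpos, hδ⟩ := hcw (B / 2) (by positivity)
  refine ⟨δ, hδpos, c * B / 2, by positivity, c * ((d:ℝ) - 1) * (3 * B / 2), ?_, ?_⟩
  · have hd1 : (1:ℝ) ≤ (d:ℝ) - 1 := by
      have : (2:ℝ) ≤ (d:ℝ) := by exact_mod_cast hd
      linarith
    nlinarith [mul_le_mul_of_nonneg_left hd1 (mul_pos hcpos hBpos).le]
  intro t ht x hx
  set v : EuclideanSpace ℝ (Fin d) := ∫ s in (0:ℝ)..t, b s with hv
  -- bounds on ‖v‖
  have hInt : IntervalIntegrable b MeasureTheory.volume 0 t := by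
    apply ContinuousOn.intervalIntegrable
    apply hb.mono
    rw [Set.uIcc_of_le ht.1.le]
    exact Set.Icc_subset_Ici_self
  have hIntc : IntervalIntegrable (fun _ : ℝ => b 0) MeasureTheory.volume 0 t :=
    intervalIntegrable_const
  have hdiff : ‖v - t • b 0‖ ≤ B / 2 * t := by
    have h1 : v - t • b 0 = ∫ s in (0:ℝ)..t, (b s - b 0) := by
      rw [intervalIntegral.integral_sub hInt hIntc, intervalIntegral.integral_const, sub_zero]
    rw [h1]
    have := intervalIntegral.norm_integral_le_of_norm_le_const
      (C := B / 2) (f := fun s => b s - b 0) (a := (0:ℝ)) (b := t) ?_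
    · calc ‖∫ s in (0:ℝ)..t, (b s - b 0)‖ ≤ B / 2 * |t - 0| := this
        _ = B / 2 * t := by rw [sub_zero, abs_of_pos ht.1]
    · intro s hs
      rw [Set.uIoc_of_le ht.1.le] at hs
      have hs0 : (0:ℝ) ≤ s := hs.1.le
      have hsd : dist s 0 < δ := by
        rw [Real.dist_eq, sub_zero, abs_of_nonneg hs0]
        exact lt_of_le_of_lt hs.2 ht.2
      have := hδ hs0 hsd
      rw [dist_eq_norm] at this
      exact this.le
  have hvlow : t * B / 2 ≤ ‖v‖ := by
    have h1 : ‖t • b 0‖ = t * B := by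
      rw [norm_smul, Real.norm_eq_abs, abs_of_pos ht.1]
    have h2 : ‖t • b 0‖ - ‖v - t • b 0‖ ≤ ‖v‖ := by
      have := norm_sub_norm_le (t • b 0) (t • b 0 - v)
      simp only [sub_sub_cancel] at this
      calc ‖t • b 0‖ - ‖v - t • b 0‖ = ‖t • b 0‖ - ‖t • b 0 - v‖ := by rw [norm_sub_rev]
        _ ≤ ‖v‖ := this
    linarith [hdiff, h2, h1 ▸ h2]
  have hvhigh : ‖v‖ ≤ 3 * (t * B) / 2 := by
    have h1 : ‖t • b 0‖ = t * B := by
      rw [norm_smul, Real.norm_eq_abs, abs_of_pos ht.1]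
    calc ‖v‖ = ‖v - t • b 0 + t • b 0‖ := by rw [sub_add_cancel]
      _ ≤ ‖v - t • b 0‖ + ‖t • b 0‖ := norm_add_le _ _
      _ ≤ B / 2 * t + t * B := by rw [h1]; linarith [hdiff]
      _ = 3 * (t * B) / 2 := by ring
  obtain ⟨hkey1, hkey2⟩ := key_bounds d hd c hcpos.le x v hx
  have hRnn : (0:ℝ) ≤ ‖x‖ ^ (-(d : ℝ)) := Real.rpow_nonneg (norm_nonneg x) _
  constructor
  · refine le_trans ?_ hkey1
    have : c * B / 2 * t ≤ c * ‖v‖ := by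
      calc c * B / 2 * t = c * (t * B / 2) := by ring
        _ ≤ c * ‖v‖ := mul_le_mul_of_nonneg_left hvlow hcpos.le
    exact mul_le_mul_of_nonneg_right this hRnn
  · refine le_trans hkey2 ?_
    have hd1 : (0:ℝ) ≤ (d:ℝ) - 1 := by
      have : (2:ℝ) ≤ (d:ℝ) := by exact_mod_cast hd
      linarith
    have : c * ((d:ℝ) - 1) * ‖v‖ ≤ c * ((d:ℝ) - 1) * (3 * B / 2) * t := by
      calc c * ((d:ℝ) - 1) * ‖v‖ ≤ c * ((d:ℝ) - 1) * (3 * (t * B) / 2) :=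
          mul_le_mul_of_nonneg_left hvhigh (by positivity)
        _ = c * ((d:ℝ) - 1) * (3 * B / 2) * t := by ring
    exact mul_le_mul_of_nonneg_right this hRnn
end
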